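/- arXiv:2110.04464 — 7 statements merged into one kernel-verified Lean document; each statement's English description precedes it below -/
import Mathlib

section
/- For every connected simple graph G on n vertices, Mo(G) ≤ (5/24)·n³ + n². -/
open SimpleGraph Finset

attribute [local instance] Classical.propDecidable

noncomputable section

/-- `closerCount G u v` is the number of vertices of `G` strictly closer to `u` than to `v`. -/
def closerCount {V : Type*} [Fintype V] (G : SimpleGraph V) (u v : V) : ℕ :=
  (Finset.univ.filter fun w => G.dist w u < G.dist w v).card

/-- The Mostar index of a graph. -/
def mostar {V : Type*} [Fintype V] (G : SimpleGraph V) : ℤ :=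
  ∑ e ∈ G.edgeFinset,
    Sym2.lift ⟨fun u v => |(closerCount G u v : ℤ) - (closerCount G v u : ℤ)|,
      fun _ _ => abs_sub_comm _ _⟩ e

/-- Number of pendent vertices strictly closer to `u` than to `v`. -/
def pendentCloserCount {V : Type*} [Fintype V] (G : SimpleGraph V) (u v : V) : ℕ :=
  (Finset.univ.filter fun w => G.degree w = 1 ∧ G.dist w u < G.dist w v).card

/-- The terminal Mostar index of a graph. -/
def terminalMostar {V : Type*} [Fintype V] (G : SimpleGraph V) : ℤ :=
  ∑ e ∈ G.edgeFinset,
    Sym2.lift ⟨fun u v => |(pendentCloserCount G u v : ℤ) - (pendentCloserCount G v u : ℤ)|,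
      fun _ _ => abs_sub_comm _ _⟩ e

/-- The irregularity of a graph. -/
def irreg {V : Type*} [Fintype V] (G : SimpleGraph V) : ℤ :=
  ∑ e ∈ G.edgeFinset,
    Sym2.lift ⟨fun u v => |(G.degree u : ℤ) - (G.degree v : ℤ)|,
      fun _ _ => abs_sub_comm _ _⟩ e

/-- The total Mostar index of a graph. -/
def totalMostar {V : Type*} [Fintype V] (G : SimpleGraph V) : ℤ :=
  ∑ e ∈ Finset.univ.sym2.filter (fun e => ¬ e.IsDiag),
    Sym2.lift ⟨fun u v => |(closerCount G u v : ℤ) - (closerCount G v u : ℤ)|,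
      fun _ _ => abs_sub_comm _ _⟩ e

/-- The sum peripherality of a vertex. -/
def sprVertex {V : Type*} [Fintype V] (G : SimpleGraph V) (v : V) : ℕ :=
  ∑ u ∈ Finset.univ.erase v, closerCount G u v

/-- The sum peripherality of a graph. -/
def spr {V : Type*} [Fintype V] (G : SimpleGraph V) : ℕ :=
  ∑ v, sprVertex G v

/-- The peripherality of a vertex. -/
def periVertex {V : Type*} [Fintype V] (G : SimpleGraph V) (v : V) : ℕ :=
  (Finset.univ.filter fun u => u ≠ v ∧ closerCount G v u < closerCount G u v).card

/-- The peripherality of a graph. -/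
def peri {V : Type*} [Fintype V] (G : SimpleGraph V) : ℕ :=
  ∑ v, periVertex G v

/-- The edge peripherality of the edge `{u, v}`. -/
def edgePeri {V : Type*} [Fintype V] (G : SimpleGraph V) (u v : V) : ℕ :=
  (Finset.univ.filter fun x => x ≠ u ∧ x ≠ v ∧
    closerCount G u x < closerCount G x u ∧ closerCount G v x < closerCount G x v).card

/-- The edge degree of the edge `{u, v}`. -/
def edgeDeg {V : Type*} [Fintype V] (G : SimpleGraph V) (u v : V) : ℕ :=
  (Finset.univ.filter fun x => x ≠ u ∧ x ≠ v ∧ (G.Adj x u ∨ G.Adj x v)).card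

/-- The eccentricity of a vertex. -/
def ecc {V : Type*} [Fintype V] (G : SimpleGraph V) (w : V) : ℕ :=
  Finset.univ.sup fun v => G.dist w v

/-- The spider graph with `k` legs whose lengths are given by `L`: the center is `none`,
and `some ⟨i, j⟩` is the `j`-th vertex (counted from the center) on leg `i`. -/
def spider (k : ℕ) (L : Fin k → ℕ) : SimpleGraph (Option ((i : Fin k) × Fin (L i))) :=
  SimpleGraph.fromRel fun u v =>
    (∃ (i : Fin k) (j : Fin (L i)), u = none ∧ v = some ⟨i, j⟩ ∧ (j : ℕ) = 0) ∨
    (∃ (i : Fin k) (j j' : Fin (L i)), u = some ⟨i, j⟩ ∧ v = some ⟨i, j'⟩ ∧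
      (j' : ℕ) = (j : ℕ) + 1)

/-- The full `m`-ary tree of depth `d`: vertex `⟨i, j⟩` is the `j`-th vertex at depth `i`, and
its parent is vertex `⟨i - 1, j / m⟩`. -/
def fullAryTree (m d : ℕ) : SimpleGraph ((i : Fin (d + 1)) × Fin (m ^ (i : ℕ))) :=
  SimpleGraph.fromRel fun u v =>
    (u.1 : ℕ) + 1 = (v.1 : ℕ) ∧ (v.2 : ℕ) / m = (u.2 : ℕ)

/-!
For an edge `uv`, every vertex of the closed neighbourhood of `v` other than `u` is at least as
close to `v` as to `u`, and `v` itself is strictly closer to `v`; hence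
`n(u,v) - n(v,u) ≤ (n - deg v) - 1`, and `|n(u,v) - n(v,u)| ≤ n - 1 - min (deg u) (deg v)`.
Order the vertices by degree and charge each edge to its lower endpoint. A vertex `v` charged
with `c` edges has `c ≤ deg v` and `c ≤ m`, the number of vertices above `v`, so it contributes
`c (n - 1 - deg v) ≤ c (n - 1 - c) ≤ max_{c ≤ m} c (n - 1 - c)`. As `m` runs over `0, …, n - 1`
these maxima add up to at most `5 n³ / 24 + n²`.
-/

theorem exists_linearOrder_monotone {α β : Type*} [LinearOrder β] (f : α → β) :
    ∃ _ : LinearOrder α, Monotone f := by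
  let _ := linearOrderOfSTO (WellOrderingRel (α := α))
  let key : α → β ×ₗ α := fun a => toLex (f a, a)
  refine ⟨LinearOrder.lift' key fun a a' h => congrArg Prod.snd (toLex.injective h),
    fun a a' h => ?_⟩
  exact (Prod.Lex.toLex_le_toLex'.mp (show key a ≤ key a' from h)).1

theorem sum_card_filter_gt_le {α : Type*} [Fintype α] [LinearOrder α] {g : ℕ → ℝ}
    (hg : ∀ m, 0 ≤ g m) : ∑ a : α, g #{b | a < b} ≤ ∑ m ∈ range (Fintype.card α), g m := by
  have hanti : StrictAnti fun a : α => #{b | a < b} := fun a a' h =>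
    card_lt_card <| (ssubset_iff_of_subset fun b hb => by
      simp only [mem_filter, mem_univ, true_and] at hb ⊢
      exact h.trans hb).mpr ⟨a', by simpa using h, by simp⟩
  rw [← sum_image fun a _ a' _ h => hanti.injective h]
  refine sum_le_sum_of_subset_of_nonneg (fun m hm => ?_) fun m _ _ => hg m
  obtain ⟨a, -, rfl⟩ := mem_image.mp hm
  exact mem_range.mpr (card_lt_card (filter_ssubset.mpr ⟨a, mem_univ a, lt_irrefl a⟩))

/-- A bound for `c * (N - c)` over reals `0 ≤ c ≤ m`, sharp when `0 ≤ N`. -/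
def peakBound (N : ℝ) (m : ℕ) : ℝ :=
  if 2 * m ≤ N then m * (N - m) else N ^ 2 / 4

theorem peakBound_nonneg (N : ℝ) (m : ℕ) : 0 ≤ peakBound N m := by
  unfold peakBound
  split_ifs with h
  · exact mul_nonneg m.cast_nonneg (by linarith [m.cast_nonneg (α := ℝ)])
  · positivity

theorem peakBound_le (N : ℝ) (m : ℕ) : peakBound N m ≤ N ^ 2 / 4 := by
  unfold peakBound
  split_ifs
  · nlinarith [sq_nonneg (N - 2 * m)]
  · rfl

theorem mul_sub_le_peakBound {N d : ℝ} {c m : ℕ} (hcd : (c : ℝ) ≤ d) (hcm : c ≤ m) :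
    c * (N - d) ≤ peakBound N m := by
  have hcm : (c : ℝ) ≤ m := by exact_mod_cast hcm
  calc (c : ℝ) * (N - d) ≤ c * (N - c) := by gcongr
    _ ≤ peakBound N m := by
      unfold peakBound
      split_ifs with h
      · nlinarith [mul_nonneg (sub_nonneg.mpr hcm) (by linarith : (0 : ℝ) ≤ N - m - c)]
      · nlinarith [sq_nonneg (N - 2 * c)]

theorem sum_range_mul_sub (N : ℝ) (k : ℕ) :
    ∑ m ∈ range k, (m : ℝ) * (N - m) = N * k * (k - 1) / 2 - k * (k - 1) * (2 * k - 1) / 6 := by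
  induction k with
  | zero => simp
  | succ k ih => rw [sum_range_succ, ih]; push_cast; ring

theorem sum_range_add_peakBound_le {N : ℝ} {a : ℕ} (ha : 2 * ((a : ℝ) - 1) ≤ N) (b : ℕ) :
    ∑ m ∈ range (a + b), peakBound N m ≤ ∑ m ∈ range a, (m : ℝ) * (N - m) + b * (N ^ 2 / 4) := by
  rw [sum_range_add]
  gcongr with m hm
  · have hm : (m : ℝ) + 1 ≤ a := by exact_mod_cast mem_range.mp hm
    rw [peakBound, if_pos (by linarith)]
  · exact (sum_le_card_nsmul _ _ _ fun m _ => peakBound_le N _).trans (by simp)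

theorem sum_range_peakBound_le (n : ℕ) :
    ∑ m ∈ range n, peakBound (n - 1) m ≤ 5 / 24 * (n : ℝ) ^ 3 + (n : ℝ) ^ 2 := by
  obtain ⟨k, rfl | rfl⟩ := Nat.even_or_odd' n
  · have h := sum_range_add_peakBound_le (N := ((2 * k : ℕ) : ℝ) - 1) (a := k)
      (by push_cast; linarith) k
    rw [← two_mul, sum_range_mul_sub] at h
    have hk : (k : ℝ) ≤ k ^ 2 := by exact_mod_cast Nat.le_self_pow two_ne_zero k
    refine h.trans ?_
    push_cast
    nlinarith [k.cast_nonneg (α := ℝ)]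
  · have h := sum_range_add_peakBound_le (N := ((2 * k + 1 : ℕ) : ℝ) - 1) (a := k + 1)
      (by push_cast; linarith) k
    rw [add_right_comm, ← two_mul, sum_range_mul_sub] at h
    refine h.trans ?_
    push_cast
    nlinarith [k.cast_nonneg (α := ℝ)]

namespace SimpleGraph

variable {V : Type*} [Fintype V] {G : SimpleGraph V} {u v : V}

theorem closerCount_pos (h : G.Adj u v) : 0 < closerCount G u v :=
  card_pos.mpr ⟨u, by simp [dist_eq_one_iff_adj.mpr h]⟩

theorem closerCount_add_degree_le (h : G.Adj u v) :
    closerCount G u v + G.degree v ≤ Fintype.card V := by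
  set nbhd := insert v ((G.neighborFinset v).erase u)
  have hdisj : Disjoint (univ.filter fun w => G.dist w u < G.dist w v) nbhd := by
    refine disjoint_right.mpr fun w hw => ?_
    simp only [mem_filter, mem_univ, true_and, not_lt]
    rcases mem_insert.mp hw with rfl | hw
    · simp
    · obtain ⟨hwu, hwv⟩ := mem_erase.mp hw
      rw [mem_neighborFinset] at hwv
      rw [dist_eq_one_iff_adj.mpr hwv.symm]
      exact (hwv.symm.reachable.trans h.symm.reachable).pos_dist_of_ne hwu
  have hnbhd : #nbhd = G.degree v := by
    rw [card_insert_of_notMem (by simp), card_erase_of_mem (by simpa using h.symm),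
      card_neighborFinset_eq_degree]
    have := G.degree_pos_iff_exists_adj v |>.mpr ⟨u, h.symm⟩
    omega
  rw [← hnbhd, closerCount, ← card_union_of_disjoint hdisj]
  exact card_le_univ _

theorem abs_closerCount_sub_le (h : G.Adj u v) :
    |(closerCount G u v : ℤ) - closerCount G v u| ≤
      Fintype.card V - 1 - min (G.degree u) (G.degree v) := by
  have := closerCount_add_degree_le h
  have := closerCount_add_degree_le h.symm
  have := closerCount_pos h
  have := closerCount_pos h.symm
  rw [abs_sub_le_iff]
  omega

section DegreeOrder

variable [LinearOrder V]

theorem mostar_le_sum_edgeFinset_inf (hdeg : Monotone fun v => G.degree v) :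
    (mostar G : ℝ) ≤ ∑ e ∈ G.edgeFinset, ((Fintype.card V : ℝ) - 1 - G.degree e.inf) := by
  rw [mostar, Int.cast_sum]
  refine sum_le_sum fun e he => ?_
  induction e using Sym2.ind with
  | _ u v =>
    rw [mem_edgeFinset, mem_edgeSet] at he
    rw [Sym2.lift_mk, Sym2.inf_mk, hdeg.map_inf]
    exact_mod_cast abs_closerCount_sub_le he

theorem card_filter_inf_eq_le (v : V) :
    #{e ∈ G.edgeFinset | e.inf = v} ≤ #{w ∈ G.neighborFinset v | v < w} := by
  refine (card_le_card fun e he => ?_).trans (card_image_le (f := fun w => s(v, w)))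
  rw [mem_filter, mem_edgeFinset] at he
  obtain ⟨he, hv⟩ := he
  induction e using Sym2.ind with
  | _ a b =>
    rw [mem_edgeSet] at he
    rw [Sym2.inf_mk] at hv
    rcases he.ne.lt_or_gt with hab | hba
    · rw [inf_eq_left.mpr hab.le] at hv
      subst hv
      exact mem_image.mpr ⟨b, mem_filter.mpr ⟨(mem_neighborFinset _ _ _).mpr he, hab⟩, rfl⟩
    · rw [inf_eq_right.mpr hba.le] at hv
      subst hv
      exact mem_image.mpr ⟨a, mem_filter.mpr ⟨(mem_neighborFinset _ _ _).mpr he.symm, hba⟩,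
        Sym2.eq_swap⟩

theorem card_filter_inf_eq_mul_le_peakBound (v : V) :
    #{e ∈ G.edgeFinset | e.inf = v} * ((Fintype.card V : ℝ) - 1 - G.degree v) ≤
      peakBound (Fintype.card V - 1) #{w | v < w} := by
  have hc := card_filter_inf_eq_le (G := G) v
  refine mul_sub_le_peakBound (by exact_mod_cast hc.trans (card_filter_le _ _)) ?_
  exact hc.trans (card_le_card (filter_subset_filter _ (subset_univ _)))

end DegreeOrder

end SimpleGraph

theorem mostar_le_of_connected_general {V : Type*} [Fintype V] (G : SimpleGraph V)
    (n : ℕ) (hn : Fintype.card V = n) :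
    (mostar G : ℝ) ≤ 5 / 24 * (n : ℝ) ^ 3 + (n : ℝ) ^ 2 := by
  obtain ⟨_, hdeg⟩ := exists_linearOrder_monotone fun v => G.degree v
  subst hn
  calc (mostar G : ℝ)
      ≤ ∑ e ∈ G.edgeFinset, ((Fintype.card V : ℝ) - 1 - G.degree e.inf) :=
        G.mostar_le_sum_edgeFinset_inf hdeg
    _ = ∑ v, #{e ∈ G.edgeFinset | e.inf = v} * ((Fintype.card V : ℝ) - 1 - G.degree v) := by
        rw [← sum_fiberwise' G.edgeFinset Sym2.inf fun v => (Fintype.card V : ℝ) - 1 - G.degree v]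
        simp only [sum_const, nsmul_eq_mul]
    _ ≤ ∑ v, peakBound (Fintype.card V - 1) #{w | v < w} :=
        sum_le_sum fun v _ => G.card_filter_inf_eq_mul_le_peakBound v
    _ ≤ ∑ m ∈ range (Fintype.card V), peakBound (Fintype.card V - 1) m :=
        sum_card_filter_gt_le (peakBound_nonneg _)
    _ ≤ _ := sum_range_peakBound_le _

theorem mostar_le_of_connected {V : Type*} [Fintype V] (G : SimpleGraph V) (hG : G.Connected)
    (n : ℕ) (hn : Fintype.card V = n) :
    (mostar G : ℝ) ≤ 5 / 24 * (n : ℝ) ^ 3 + (n : ℝ) ^ 2 :=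
  mostar_le_of_connected_general G n hn

end
end

section
/- For every connected bipartite simple graph G on n vertices, the terminal Mostar index satisfies Mo^⊤(G) ≤ n³/27 + n². -/
open SimpleGraph Finset

attribute [local instance] Classical.propDecidable

noncomputable section

/-!
Each summand of `Mo^⊤(G)` is at most the number `p` of pendent vertices, so `Mo^⊤(G) ≤ p |E|`.
At most `p` edges meet a pendent vertex; every other edge joins a non-pendent vertex of one colour
class to one of the other, so `|E| ≤ p + a b` with `p + a + b ≤ n`. Finally `p² ≤ n²`, and AM-GM
for `p, (a + b) / 2, (a + b) / 2` gives `p a b ≤ n³ / 27`.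
-/

theorem card_edgeFinset_le_sum_degree_add {V : Type*} [Fintype V] (G H : SimpleGraph V)
    (P : Finset V) (hH : ∀ ⦃v w⦄, G.Adj v w → v ∉ P → w ∉ P → H.Adj v w) :
    #G.edgeFinset ≤ ∑ v ∈ P, G.degree v + #H.edgeFinset := by
  have hcover : G.edgeFinset ⊆ (P.biUnion fun v => G.incidenceFinset v) ∪ H.edgeFinset := by
    intro e he
    induction e using Sym2.ind with
    | _ v w =>
      rw [mem_edgeFinset, mem_edgeSet] at he
      by_cases hv : v ∈ P
      · exact mem_union_left _ <| mem_biUnion.2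
          ⟨v, hv, (G.mem_incidenceFinset v _).2 (G.mk'_mem_incidenceSet_left_iff.2 he)⟩
      by_cases hw : w ∈ P
      · exact mem_union_left _ <| mem_biUnion.2
          ⟨w, hw, (G.mem_incidenceFinset w _).2 (G.mk'_mem_incidenceSet_right_iff.2 he)⟩
      exact mem_union_right _ <| mem_edgeFinset.2 (hH he hv hw)
  calc #G.edgeFinset ≤ #(P.biUnion fun v => G.incidenceFinset v) + #H.edgeFinset :=
        (card_le_card hcover).trans (card_union_le _ _)
    _ ≤ ∑ v ∈ P, G.degree v + #H.edgeFinset := by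
      gcongr
      exact card_biUnion_le.trans_eq (sum_congr rfl fun v _ => card_incidenceFinset_eq_degree G v)

theorem SimpleGraph.IsBipartiteWith.card_edgeFinset_le {V : Type*} [Fintype V]
    {H : SimpleGraph V} {s t : Finset V} (h : H.IsBipartiteWith s t) :
    #H.edgeFinset ≤ #s * #t := by
  have := h.encard_edgeSet_le
  rw [← coe_edgeFinset, Set.encard_coe_eq_coe_finsetCard, Set.encard_coe_eq_coe_finsetCard,
    Set.encard_coe_eq_coe_finsetCard] at this
  exact_mod_cast this

theorem Finset.card_add_card_sdiff_add_card_sdiff_le {V : Type*} [Fintype V] [DecidableEq V]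
    (P : Finset V) {s t : Finset V} (hst : Disjoint s t) :
    #P + #(s \ P) + #(t \ P) ≤ Fintype.card V := by
  rw [add_assoc, ← card_union_of_disjoint (hst.mono sdiff_subset sdiff_subset),
    ← union_sdiff_distrib, add_comm, card_sdiff_add_card]
  exact card_le_univ _

theorem add_mul_mul_le_cube_div_add_sq {p a b n : ℚ} (hp : 0 ≤ p) (ha : 0 ≤ a) (hb : 0 ≤ b)
    (hn : p + a + b ≤ n) : (p + a * b) * p ≤ n ^ 3 / 27 + n ^ 2 := by
  have hamgm : (p + a * b) * p ≤ (p + a + b) ^ 3 / 27 + (p + a + b) ^ 2 := by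
    nlinarith [mul_nonneg hp (sq_nonneg (a - b)),
      mul_nonneg (sq_nonneg (2 * p - a - b)) (by linarith : (0:ℚ) ≤ p + 4 * a + 4 * b),
      mul_nonneg ha hb, mul_nonneg (add_nonneg ha hb) hp]
  have hsum : 0 ≤ p + a + b := by positivity
  exact hamgm.trans (by gcongr)

section Pendent

variable {V : Type*} [Fintype V] (G : SimpleGraph V)

def pendentVertices : Finset V :=
  univ.filter fun v => G.degree v = 1

theorem pendentCloserCount_le_card_pendentVertices (u v : V) :
    pendentCloserCount G u v ≤ #(pendentVertices G) :=
  card_le_card fun w hw => by simp_all [pendentVertices]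

theorem terminalMostar_le_card_edgeFinset_mul_card_pendentVertices :
    terminalMostar G ≤ #G.edgeFinset * #(pendentVertices G) := by
  refine (sum_le_card_nsmul _ _ _ fun e _ => ?_).trans_eq (nsmul_eq_mul _ _)
  induction e using Sym2.ind with
  | _ u v =>
    have huv := pendentCloserCount_le_card_pendentVertices G u v
    have hvu := pendentCloserCount_le_card_pendentVertices G v u
    rw [Sym2.lift_mk, abs_sub_le_iff]
    omega

theorem card_edgeFinset_le_card_pendentVertices_add {s t : Finset V}
    (h : G.IsBipartiteWith s t) :
    #G.edgeFinset ≤ #(pendentVertices G) +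
      #(s \ pendentVertices G) * #(t \ pendentVertices G) := by
  set P := pendentVertices G
  have hdisj : Disjoint (↑(s \ P) : Set V) ↑(t \ P) :=
    h.disjoint.mono (by simp) (by simp)
  have hdeg : ∑ v ∈ P, G.degree v = #P := by
    rw [card_eq_sum_ones]
    exact sum_congr rfl fun v hv => (mem_filter.1 hv).2
  refine (card_edgeFinset_le_sum_degree_add G (G.between ↑(s \ P) ↑(t \ P)) P ?_).trans ?_
  · intro v w hvw hv hw
    refine ⟨hvw, ?_⟩
    simpa [hv, hw] using h.mem_of_adj hvw
  · rw [hdeg]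
    gcongr
    exact (between_isBipartiteWith hdisj).card_edgeFinset_le

end Pendent

theorem terminalMostar_le_of_bipartite_general {V : Type*} [Fintype V] (G : SimpleGraph V)
    (hbip : G.Colorable 2) (n : ℕ) (hn : Fintype.card V = n) :
    (terminalMostar G : ℚ) ≤ (n : ℚ) ^ 3 / 27 + (n : ℚ) ^ 2 := by
  obtain ⟨s, t, hst⟩ := IsBipartite.exists_isBipartiteWith hbip
  rw [← s.coe_toFinset, ← t.coe_toFinset] at hst
  set P := pendentVertices G
  have hT := terminalMostar_le_card_edgeFinset_mul_card_pendentVertices G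
  have hE := card_edgeFinset_le_card_pendentVertices_add G hst
  have hcard : #P + #(s.toFinset \ P) + #(t.toFinset \ P) ≤ n :=
    hn ▸ card_add_card_sdiff_add_card_sdiff_le P (disjoint_coe.1 hst.disjoint)
  calc (terminalMostar G : ℚ) ≤ #G.edgeFinset * #P := by exact_mod_cast hT
    _ ≤ (#P + #(s.toFinset \ P) * #(t.toFinset \ P)) * #P := by gcongr; exact_mod_cast hE
    _ ≤ n ^ 3 / 27 + n ^ 2 :=
      add_mul_mul_le_cube_div_add_sq (by positivity) (by positivity) (by positivity)
        (by exact_mod_cast hcard)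

theorem terminalMostar_le_of_bipartite {V : Type*} [Fintype V] (G : SimpleGraph V)
    (hG : G.Connected) (hbip : G.Colorable 2) (n : ℕ) (hn : Fintype.card V = n) :
    (terminalMostar G : ℚ) ≤ (n : ℚ) ^ 3 / 27 + (n : ℚ) ^ 2 :=
  terminalMostar_le_of_bipartite_general G hbip n hn

end
end

section
/- If S is a spider of order n with k ≥ 2 legs, then Mo^⊤(S) = (k−2)(n−1). -/
open SimpleGraph Finset

attribute [local instance] Classical.propDecidable

noncomputable section

/-!
The pendent vertices of the spider are the far ends (`tip`s) of its `k` legs. Every edge joins a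
vertex `x` of some leg `i` to its `parent`, the next vertex towards the centre: the tip of leg `i`
is strictly closer to `x`, the tips of the other `k - 1` legs are strictly closer to the parent.
So each of the `n - 1` edges contributes `|(k - 1) - 1| = k - 2`.

Distances from a tip are obtained by writing down the distance function explicitly: it vanishes at
the tip, changes by at most one along an edge, and decreases along some edge out of every other
vertex, which pins it down as the graph distance.
-/

namespace SimpleGraph

variable {V : Type*} {G : SimpleGraph V} {f : V → ℕ}

theorem Walk.le_add_length_of_forall_adj_le (hf : ∀ u v, G.Adj u v → f v ≤ f u + 1)
    {u v : V} (p : G.Walk u v) : f v ≤ f u + p.length := by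
  induction p with
  | nil => simp
  | cons h _ ih =>
    have := hf _ _ h
    rw [Walk.length_cons]
    omega

theorem exists_walk_length_le_of_exists_adj_lt (t : V)
    (hdesc : ∀ w ≠ t, ∃ w', G.Adj w w' ∧ f w' < f w) (w : V) :
    ∃ p : G.Walk t w, p.length ≤ f w := by
  induction hw : f w using Nat.strong_induction_on generalizing w with
  | _ m ih =>
    by_cases hwt : w = t
    · subst hwt
      exact ⟨Walk.nil, Nat.zero_le _⟩
    · obtain ⟨w', hadj, hlt⟩ := hdesc w hwt
      obtain ⟨p, hp⟩ := ih (f w') (hw ▸ hlt) w' rfl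
      exact ⟨p.concat hadj.symm, by rw [Walk.length_concat]; omega⟩

theorem dist_eq_of_forall_adj_le_of_exists_adj_lt {t : V} (ht : f t = 0)
    (hf : ∀ u v, G.Adj u v → f v ≤ f u + 1) (hdesc : ∀ w ≠ t, ∃ w', G.Adj w w' ∧ f w' < f w)
    (w : V) : G.dist t w = f w := by
  obtain ⟨p, hp⟩ := exists_walk_length_le_of_exists_adj_lt t hdesc w
  obtain ⟨q, hq⟩ := Reachable.exists_walk_length_eq_dist ⟨p⟩
  have hlower := q.le_add_length_of_forall_adj_le hf
  have hupper := dist_le p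
  omega

end SimpleGraph

namespace Spider

variable {k : ℕ} {L : Fin k → ℕ}

def parent : ((i : Fin k) × Fin (L i)) → Option ((i : Fin k) × Fin (L i))
  | ⟨_, ⟨0, _⟩⟩ => none
  | ⟨i, ⟨j + 1, h⟩⟩ => some ⟨i, ⟨j, by omega⟩⟩

theorem leg_eq_and_succ_eq_of_parent_eq_some {x y : (i : Fin k) × Fin (L i)} (h : parent x = some y) :
    y.1 = x.1 ∧ (y.2 : ℕ) + 1 = x.2 := by
  rcases x with ⟨i, ⟨_ | j, hj⟩⟩
  · cases h
  · cases h
    exact ⟨rfl, rfl⟩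

theorem adj_iff {u v : Option ((i : Fin k) × Fin (L i))} :
    (spider k L).Adj u v ↔
      (∃ x, u = parent x ∧ v = some x) ∨ (∃ x, v = parent x ∧ u = some x) := by
  have hrel : ∀ u v : Option ((i : Fin k) × Fin (L i)),
      ((∃ (i : Fin k) (j : Fin (L i)), u = none ∧ v = some ⟨i, j⟩ ∧ (j : ℕ) = 0) ∨
        (∃ (i : Fin k) (j j' : Fin (L i)), u = some ⟨i, j⟩ ∧ v = some ⟨i, j'⟩ ∧
          (j' : ℕ) = (j : ℕ) + 1)) ↔ ∃ x, u = parent x ∧ v = some x := by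
    intro u v
    constructor
    · rintro (⟨i, ⟨j, hj⟩, rfl, rfl, rfl : j = 0⟩ | ⟨i, j, ⟨j', hj'⟩, rfl, rfl, rfl : j' = _⟩)
      · exact ⟨⟨i, ⟨0, hj⟩⟩, rfl, rfl⟩
      · exact ⟨⟨i, ⟨j + 1, hj'⟩⟩, rfl, rfl⟩
    · rintro ⟨⟨i, ⟨_ | j, hj⟩⟩, rfl, rfl⟩
      · exact Or.inl ⟨i, ⟨0, hj⟩, rfl, rfl, rfl⟩
      · exact Or.inr ⟨i, ⟨j, by omega⟩, ⟨j + 1, hj⟩, rfl, rfl, rfl⟩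
  have hne : ∀ x : (i : Fin k) × Fin (L i), parent x ≠ some x := fun x h => by
    have := (leg_eq_and_succ_eq_of_parent_eq_some h).2
    omega
  rw [spider, fromRel_adj, hrel, hrel]
  constructor
  · exact fun h => h.2
  · rintro (⟨x, rfl, rfl⟩ | ⟨x, rfl, rfl⟩)
    · exact ⟨hne x, Or.inl ⟨x, rfl, rfl⟩⟩
    · exact ⟨(hne x).symm, Or.inr ⟨x, rfl, rfl⟩⟩

theorem adj_parent (x : (i : Fin k) × Fin (L i)) : (spider k L).Adj (parent x) (some x) :=
  adj_iff.mpr (Or.inl ⟨x, rfl, rfl⟩)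

def tip (hL : ∀ i, 1 ≤ L i) (i : Fin k) : Option ((i : Fin k) × Fin (L i)) :=
  some ⟨i, ⟨L i - 1, by have := hL i; omega⟩⟩

theorem some_eq_tip (hL : ∀ i, 1 ≤ L i) {i : Fin k} {j : Fin (L i)} (hj : (j : ℕ) + 1 = L i) :
    some ⟨i, j⟩ = tip hL i := by
  simp only [tip, Option.some.injEq, Sigma.mk.inj_iff, heq_eq_eq, true_and]
  exact Fin.ext (by simp only; omega)

theorem tip_injective (hL : ∀ i, 1 ≤ L i) : Function.Injective (tip hL) := by
  intro i i' h
  cases h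
  rfl

def tipDist (i : Fin k) : Option ((i : Fin k) × Fin (L i)) → ℕ
  | none => L i
  | some x => if x.1 = i then L i - (x.2 + 1) else L i + (x.2 + 1)

theorem tipDist_some_add_one {i : Fin k} {x : (i : Fin k) × Fin (L i)} (h : x.1 = i) :
    tipDist i (some x) + 1 = tipDist i (parent x) := by
  rcases x with ⟨i', ⟨_ | j, hj⟩⟩ <;> subst h <;> simp [parent, tipDist] <;> omega

theorem tipDist_parent_add_one {i : Fin k} {x : (i : Fin k) × Fin (L i)} (h : x.1 ≠ i) :
    tipDist i (parent x) + 1 = tipDist i (some x) := by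
  rcases x with ⟨i', ⟨_ | j, hj⟩⟩ <;> simp_all [parent, tipDist]
  omega

theorem dist_tip (hL : ∀ i, 1 ≤ L i) (i : Fin k) (w : Option ((i : Fin k) × Fin (L i))) :
    (spider k L).dist (tip hL i) w = tipDist i w := by
  refine SimpleGraph.dist_eq_of_forall_adj_le_of_exists_adj_lt ?_ ?_ ?_ w
  · simp only [tip, tipDist, if_pos]
    omega
  · intro u v huv
    have hstep (x : (i : Fin k) × Fin (L i)) : tipDist i (some x) ≤ tipDist i (parent x) + 1 ∧
        tipDist i (parent x) ≤ tipDist i (some x) + 1 := by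
      by_cases h : x.1 = i
      · have := tipDist_some_add_one h
        omega
      · have := tipDist_parent_add_one h
        omega
    rcases adj_iff.mp huv with ⟨x, rfl, rfl⟩ | ⟨x, rfl, rfl⟩
    exacts [(hstep x).1, (hstep x).2]
  · rintro (_ | ⟨i', ⟨j, hj⟩⟩) hw
    · refine ⟨some ⟨i, ⟨0, hL i⟩⟩, adj_parent ⟨i, ⟨0, hL i⟩⟩, ?_⟩
      simp only [tipDist, ↓reduceIte, zero_add]
      exact Nat.sub_lt (hL i) one_pos
    by_cases h : i' = i
    · subst h
      have hlt : j + 1 < L i' := lt_of_le_of_ne hj fun hj' => hw (some_eq_tip hL hj')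
      exact ⟨_, adj_parent ⟨i', ⟨j + 1, hlt⟩⟩,
        Nat.lt_of_lt_of_eq (Nat.lt_succ_self _) (tipDist_some_add_one rfl)⟩
    · exact ⟨_, (adj_parent _).symm,
        Nat.lt_of_lt_of_eq (Nat.lt_succ_self _) (tipDist_parent_add_one (x := ⟨i', ⟨j, hj⟩⟩) h)⟩

theorem degree_tip (hL : ∀ i, 1 ≤ L i) (i : Fin k) : (spider k L).degree (tip hL i) = 1 := by
  rw [degree_eq_one_iff_existsUnique_adj]
  refine ⟨_, (adj_parent _).symm, fun v hv => ?_⟩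
  rcases adj_iff.mp hv with ⟨⟨i', j⟩, hx, rfl⟩ | ⟨x, rfl, hx⟩
  · obtain ⟨rfl, hlast⟩ := leg_eq_and_succ_eq_of_parent_eq_some hx.symm
    have := j.2
    simp only at hlast
    omega
  · simp only [tip, Option.some.injEq] at hx
    rw [← hx]

theorem exists_eq_tip_of_degree_eq_one (hk : 2 ≤ k) (hL : ∀ i, 1 ≤ L i)
    {w : Option ((i : Fin k) × Fin (L i))} (hw : (spider k L).degree w = 1) :
    ∃ i, w = tip hL i := by
  obtain ⟨v, -, huniq⟩ := degree_eq_one_iff_existsUnique_adj.mp hw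
  rcases w with _ | ⟨i, ⟨j, hj⟩⟩
  · have h0 := huniq _ (adj_parent ⟨⟨0, by omega⟩, ⟨0, hL _⟩⟩)
    have h1 := huniq _ (adj_parent ⟨⟨1, by omega⟩, ⟨0, hL _⟩⟩)
    exact absurd (h0.trans h1.symm) (by simp)
  · refine ⟨i, some_eq_tip hL ?_⟩
    by_contra hne
    have hlt : j + 1 < L i := lt_of_le_of_ne hj hne
    have hchild := huniq _ (adj_parent ⟨i, ⟨j + 1, hlt⟩⟩)
    have hparent := huniq _ (adj_parent ⟨i, ⟨j, hj⟩⟩).symm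
    have := (leg_eq_and_succ_eq_of_parent_eq_some (hparent.trans hchild.symm)).2
    simp only at this
    omega

theorem pendentCloserCount_eq (hk : 2 ≤ k) (hL : ∀ i, 1 ≤ L i)
    (u v : Option ((i : Fin k) × Fin (L i))) :
    pendentCloserCount (spider k L) u v = #{i | tipDist i u < tipDist i v} := by
  have hpendent : ({w | (spider k L).degree w = 1 ∧
      (spider k L).dist w u < (spider k L).dist w v} : Finset _) =
      ({i | tipDist i u < tipDist i v} : Finset _).map ⟨tip hL, tip_injective hL⟩ := by
    ext w
    simp only [mem_filter, mem_univ, true_and, mem_map, Function.Embedding.coeFn_mk]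
    constructor
    · rintro ⟨hdeg, hlt⟩
      obtain ⟨i, rfl⟩ := exists_eq_tip_of_degree_eq_one hk hL hdeg
      exact ⟨i, by rwa [dist_tip, dist_tip] at hlt, rfl⟩
    · rintro ⟨i, hlt, rfl⟩
      exact ⟨degree_tip hL i, by rwa [dist_tip, dist_tip]⟩
  rw [pendentCloserCount, hpendent, card_map]

theorem tipDist_some_lt_parent_iff {i : Fin k} {x : (i : Fin k) × Fin (L i)} :
    tipDist i (some x) < tipDist i (parent x) ↔ x.1 = i := by
  by_cases h : x.1 = i
  · have := tipDist_some_add_one h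
    simp only [h, iff_true]
    omega
  · have := tipDist_parent_add_one h
    simp only [h, iff_false]
    omega

theorem tipDist_parent_lt_some_iff {i : Fin k} {x : (i : Fin k) × Fin (L i)} :
    tipDist i (parent x) < tipDist i (some x) ↔ x.1 ≠ i := by
  by_cases h : x.1 = i
  · have := tipDist_some_add_one h
    simp only [h, ne_eq, not_true_eq_false, iff_false]
    omega
  · have := tipDist_parent_add_one h
    simp only [h, ne_eq, not_false_eq_true, iff_true]
    omega

theorem pendentCloserCount_some_parent (hk : 2 ≤ k) (hL : ∀ i, 1 ≤ L i)
    (x : (i : Fin k) × Fin (L i)) : pendentCloserCount (spider k L) (some x) (parent x) = 1 := by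
  rw [pendentCloserCount_eq hk hL, card_eq_one]
  exact ⟨x.1, by ext i; simp [tipDist_some_lt_parent_iff, eq_comm]⟩

theorem pendentCloserCount_parent_some (hk : 2 ≤ k) (hL : ∀ i, 1 ≤ L i)
    (x : (i : Fin k) × Fin (L i)) :
    pendentCloserCount (spider k L) (parent x) (some x) = k - 1 := by
  simp [pendentCloserCount_eq hk hL, tipDist_parent_lt_some_iff, filter_ne]

theorem edgeFinset_eq :
    (spider k L).edgeFinset = univ.image fun x => s(parent x, some x) := by
  ext e
  induction e using Sym2.ind with
  | _ u v =>
    simp only [mem_edgeFinset, mem_edgeSet, adj_iff, mem_image, mem_univ, true_and,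
      Sym2.eq_iff]
    grind

theorem injective_sym2_parent :
    Function.Injective fun x : (i : Fin k) × Fin (L i) => s(parent x, some x) := by
  intro x y h
  rcases Sym2.eq_iff.mp h with ⟨-, h⟩ | ⟨h1, h2⟩
  · exact Option.some.inj h
  · have := (leg_eq_and_succ_eq_of_parent_eq_some h1).2
    have := (leg_eq_and_succ_eq_of_parent_eq_some h2.symm).2
    omega

end Spider

theorem terminalMostar_spider (k : ℕ) (hk : 2 ≤ k) (L : Fin k → ℕ) (hL : ∀ i, 1 ≤ L i)
    (n : ℕ) (hn : n = Fintype.card (Option ((i : Fin k) × Fin (L i)))) :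
    terminalMostar (spider k L) = ((k : ℤ) - 2) * ((n : ℤ) - 1) := by
  have hedge : ∀ x, |(pendentCloserCount (spider k L) (Spider.parent x) (some x) : ℤ) -
      pendentCloserCount (spider k L) (some x) (Spider.parent x)| = k - 2 := by
    intro x
    rw [Spider.pendentCloserCount_parent_some hk hL, Spider.pendentCloserCount_some_parent hk hL,
      abs_of_nonneg] <;> omega
  rw [terminalMostar, Spider.edgeFinset_eq,
    sum_image fun x _ y _ h => Spider.injective_sym2_parent h]
  simp only [Sym2.lift_mk, hedge, sum_const, card_univ, hn, Fintype.card_option]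
  push_cast
  ring
end
end

section
/- For all integers m, d ≥ 2, the full m-ary tree F_{m,d} of depth d satisfies irr(F_{m,d}) = m + m^{d+1} and Mo(F_{m,d}) = N² − N − 2d·(N + 1/(m−1)) + (2/(m−1))·(N−1), where N = (m^{d+1} − 1)/(m−1) is the order of F_{m,d}. -/
open SimpleGraph Finset

attribute [local instance] Classical.propDecidable

noncomputable section

/-!
The ancestor at depth `l` of the vertex `⟨i, j⟩` is `⟨l, j / m ^ (i - l)⟩`, and the distance between
two vertices is the sum of their depths minus twice the depth of their deepest common ancestor.
Hence, for a vertex `v` at depth `i ≥ 1`, exactly the `S_i = 1 + m + ⋯ + m ^ (d - i)` vertices of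
the subtree rooted at `v` are closer to `v` than to its parent, and all the others are closer to the
parent; the `m ^ i` edges above depth `i` thus contribute `N - 2 S_i` each to the Mostar index.
The degrees are `m` at the root, `m + 1` at inner vertices and `1` at the leaves, so only the edges
above depths `1` and `d` contribute to the irregularity. Geometric sums give the closed forms.
-/

theorem SimpleGraph.Walk.le_add_length {V : Type*} {G : SimpleGraph V} {f : V → ℕ}
    (hf : ∀ u u', G.Adj u u' → f u ≤ f u' + 1) {u v : V} (p : G.Walk u v) :
    f u ≤ f v + p.length := by
  induction p with
  | nil => simp
  | cons h _ ih => rw [Walk.length_cons]; linarith [hf _ _ h]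

theorem Fin.card_filter_div_eq {n t c : ℕ} (ht : 0 < t) (h : (c + 1) * t ≤ n) :
    #{b : Fin n | (b : ℕ) / t = c} = t := by
  rw [card_filter, Fin.sum_univ_eq_sum_range (fun x => if x / t = c then 1 else 0), ← card_filter]
  have hIco : {x ∈ range n | x / t = c} = Ico (c * t) (c * t + t) := by
    rw [add_one_mul] at h
    ext x
    simp only [mem_filter, mem_range, mem_Ico, Nat.div_eq_iff ht]
    omega
  rw [hIco, Nat.card_Ico]
  omega

theorem Nat.two_mul_geomSum_lt {m n N : ℕ} (hm : 2 ≤ m) (hn : n < N) :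
    2 * ∑ k ∈ range n, m ^ k < ∑ k ∈ range N, m ^ k :=
  calc 2 * ∑ k ∈ range n, m ^ k
      < ∑ k ∈ range n, m ^ k + m ^ n := by
        have := Nat.geomSum_lt hm (s := range n) fun k hk => mem_range.1 hk
        omega
    _ = ∑ k ∈ range (n + 1), m ^ k := (sum_range_succ _ _).symm
    _ ≤ ∑ k ∈ range N, m ^ k := sum_le_sum_of_subset (range_subset_range.2 hn)

theorem sum_pow_mul_sub_two_geom_sum {K : Type*} [Field K] {q : K} (hq : q ≠ 1) (d : ℕ) {N : K}
    (hN : N = (q ^ (d + 1) - 1) / (q - 1)) :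
    ∑ i ∈ range d, q ^ (i + 1) * (N - 2 * ∑ k ∈ range (d - i), q ^ k) =
      N ^ 2 - N - 2 * d * (N + 1 / (q - 1)) + 2 / (q - 1) * (N - 1) := by
  have hq' : q - 1 ≠ 0 := sub_ne_zero.2 hq
  have hterm : ∀ i ∈ range d, q ^ (i + 1) * (N - 2 * ∑ k ∈ range (d - i), q ^ k) =
      (N + 2 / (q - 1)) * q ^ (i + 1) - 2 * q ^ (d + 1) / (q - 1) := by
    intro i hi
    have hpow : q ^ (i + 1) * q ^ (d - i) = q ^ (d + 1) := by
      rw [← pow_add]; congr 1; have := mem_range.1 hi; omega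
    rw [geom_sum_eq hq]
    field_simp
    linear_combination (-2 : K) * hpow
  have hgeom : ∑ i ∈ range d, q ^ (i + 1) = N - 1 := by
    rw [hN, ← geom_sum_eq hq, sum_range_succ' _ d, pow_zero, add_sub_cancel_right]
  have hpow : q ^ (d + 1) = (q - 1) * N + 1 := by
    rw [hN]; field_simp; ring
  rw [sum_congr rfl hterm, sum_sub_distrib, ← mul_sum, sum_const, card_range, nsmul_eq_mul,
    hgeom, hpow]
  field_simp
  ring

namespace FullAryTree

abbrev Vert (m d : ℕ) := (i : Fin (d + 1)) × Fin (m ^ (i : ℕ))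

variable {m d : ℕ}

theorem vert_ext {u v : Vert m d} (h₁ : (u.1 : ℕ) = v.1) (h₂ : (u.2 : ℕ) = v.2) : u = v :=
  Sigma.ext (Fin.ext h₁) ((Fin.heq_ext_iff (by rw [Fin.ext h₁])).2 h₂)

/-- The ancestor of `v` at depth `l`; this is `v` itself when `l` exceeds the depth of `v`. -/
def ancestor (v : Vert m d) (l : ℕ) : Vert m d :=
  ⟨⟨min l v.1, by omega⟩, ⟨v.2 / m ^ ((v.1 : ℕ) - l), Nat.div_lt_of_lt_mul <| by
    rw [← pow_add, show (v.1 : ℕ) - l + min l v.1 = v.1 by omega]; exact v.2.2⟩⟩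

@[simp] theorem ancestor_fst (v : Vert m d) (l : ℕ) :
    ((ancestor v l).1 : ℕ) = min l v.1 := rfl

@[simp] theorem ancestor_snd (v : Vert m d) (l : ℕ) :
    ((ancestor v l).2 : ℕ) = v.2 / m ^ ((v.1 : ℕ) - l) := rfl

theorem ancestor_of_le {v : Vert m d} {l : ℕ} (h : (v.1 : ℕ) ≤ l) : ancestor v l = v :=
  vert_ext (by simp [h]) (by simp [Nat.sub_eq_zero_of_le h])

theorem ancestor_ancestor (v : Vert m d) (l k : ℕ) :
    ancestor (ancestor v l) k = ancestor v (min l k) := by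
  refine vert_ext (by simp only [ancestor_fst]; omega) ?_
  simp only [ancestor_snd, ancestor_fst, Nat.div_div_eq_div_mul, ← pow_add]
  congr 2
  omega

theorem ancestor_zero (u v : Vert m d) : ancestor u 0 = ancestor v 0 := by
  have hu := (ancestor u 0).2.2
  have hv := (ancestor v 0).2.2
  simp only [ancestor_fst, zero_le, min_eq_left, pow_zero] at hu hv
  exact vert_ext (by simp) (by omega)

def parent (v : Vert m d) : Vert m d := ancestor v (v.1 - 1)

def meetDepth (u v : Vert m d) : ℕ :=
  Nat.findGreatest (fun l => ancestor u l = ancestor v l) (min u.1 v.1)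

theorem le_meetDepth_iff {u v : Vert m d} {l : ℕ} :
    l ≤ meetDepth u v ↔ l ≤ u.1 ∧ l ≤ v.1 ∧ ancestor u l = ancestor v l := by
  constructor
  · intro hl
    have hle := Nat.findGreatest_le (P := fun l => ancestor u l = ancestor v l) (min u.1 v.1)
    have hspec : ancestor u (meetDepth u v) = ancestor v (meetDepth u v) :=
      Nat.findGreatest_spec (P := fun l => ancestor u l = ancestor v l) (Nat.zero_le _)
        (ancestor_zero u v)
    refine ⟨by unfold meetDepth at hl; omega, by unfold meetDepth at hl; omega, ?_⟩
    rw [← min_eq_right hl, ← ancestor_ancestor, hspec, ancestor_ancestor]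
  · rintro ⟨hu, hv, h⟩
    exact Nat.le_findGreatest (le_min hu hv) h

theorem meetDepth_le_left (u v : Vert m d) : meetDepth u v ≤ u.1 :=
  (le_meetDepth_iff.1 le_rfl).1

theorem meetDepth_le_right (u v : Vert m d) : meetDepth u v ≤ v.1 :=
  (le_meetDepth_iff.1 le_rfl).2.1

theorem meetDepth_comm (u v : Vert m d) : meetDepth u v = meetDepth v u :=
  eq_of_forall_le_iff fun _ => by simp only [le_meetDepth_iff]; tauto

theorem meetDepth_self (v : Vert m d) : meetDepth v v = v.1 :=
  eq_of_forall_le_iff fun _ => by simp [le_meetDepth_iff]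

theorem meetDepth_ancestor_left {u : Vert m d} {l : ℕ} (hl : l ≤ u.1) (v : Vert m d) :
    meetDepth (ancestor u l) v = min (meetDepth u v) l :=
  eq_of_forall_le_iff fun k => by
    simp only [le_meetDepth_iff, le_min_iff, ancestor_fst, ancestor_ancestor]
    constructor
    · rintro ⟨⟨hkl, -⟩, hkv, h⟩
      rw [min_eq_right hkl] at h
      exact ⟨⟨by omega, hkv, h⟩, hkl⟩
    · rintro ⟨⟨hku, hkv, h⟩, hkl⟩
      exact ⟨⟨hkl, hku⟩, hkv, by rwa [min_eq_right hkl]⟩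

theorem meetDepth_eq_iff {w v : Vert m d} : meetDepth w v = v.1 ↔ ancestor w v.1 = v := by
  rw [le_antisymm_iff, and_iff_right (meetDepth_le_right w v), le_meetDepth_iff,
    ancestor_of_le le_rfl]
  refine ⟨fun h => h.2.2, fun h => ⟨?_, le_rfl, h⟩⟩
  have := congrArg (fun x : Vert m d => (x.1 : ℕ)) h
  simp only [ancestor_fst] at this
  omega

@[simp] theorem parent_fst (v : Vert m d) : ((parent v).1 : ℕ) = v.1 - 1 := by
  simp [parent]

theorem rel_iff_eq_parent {u v : Vert m d} :
    ((u.1 : ℕ) + 1 = v.1 ∧ (v.2 : ℕ) / m = u.2) ↔ ((v.1 : ℕ) ≠ 0 ∧ u = parent v) := by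
  constructor
  · rintro ⟨hl, hi⟩
    refine ⟨by omega, vert_ext (by simp only [parent_fst]; omega) ?_⟩
    simp [parent, show (v.1 : ℕ) - (v.1 - 1) = 1 by omega, hi]
  · rintro ⟨hv, rfl⟩
    simp only [parent, ancestor_fst, ancestor_snd, show (v.1 : ℕ) - (v.1 - 1) = 1 by omega,
      pow_one, and_true]
    omega

theorem adj_iff {u v : Vert m d} : (fullAryTree m d).Adj u v ↔
    ((v.1 : ℕ) ≠ 0 ∧ u = parent v) ∨ ((u.1 : ℕ) ≠ 0 ∧ v = parent u) := by
  rw [fullAryTree, fromRel_adj, rel_iff_eq_parent, rel_iff_eq_parent, and_iff_right_iff_imp]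
  rintro (⟨hv, rfl⟩ | ⟨hu, rfl⟩) h
  · have := congrArg (fun x : Vert m d => (x.1 : ℕ)) h
    simp only [parent_fst] at this
    omega
  · have := congrArg (fun x : Vert m d => (x.1 : ℕ)) h
    simp only [parent_fst] at this
    omega

theorem adj_parent {v : Vert m d} (hv : (v.1 : ℕ) ≠ 0) : (fullAryTree m d).Adj (parent v) v :=
  adj_iff.2 (Or.inl ⟨hv, rfl⟩)

theorem exists_walk_ancestor (v : Vert m d) (l : ℕ) :
    ∃ p : (fullAryTree m d).Walk v (ancestor v l), p.length = v.1 - l := by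
  induction h : (v.1 : ℕ) - l generalizing v with
  | zero => rw [ancestor_of_le (by omega)]; exact ⟨.nil, rfl⟩
  | succ n ih =>
    obtain ⟨p, hp⟩ := ih (parent v) (by rw [parent_fst]; omega)
    have hanc : ancestor (parent v) l = ancestor v l := by
      rw [parent, ancestor_ancestor, min_eq_right (by omega)]
    exact ⟨.cons (adj_parent (by omega)).symm (p.copy rfl hanc), by simp [hp]⟩

/-- The graph distance in the tree: up from `u` to the deepest common ancestor, then down to `v`. -/
def treeDist (u v : Vert m d) : ℕ := u.1 + v.1 - 2 * meetDepth u v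

theorem treeDist_self (v : Vert m d) : treeDist v v = 0 := by
  rw [treeDist, meetDepth_self]
  omega

theorem treeDist_le_of_adj {u u' : Vert m d} (h : (fullAryTree m d).Adj u u') (v : Vert m d) :
    treeDist u v ≤ treeDist u' v + 1 := by
  rcases adj_iff.1 h with ⟨hu', rfl⟩ | ⟨hu, rfl⟩
  · have := meetDepth_le_left u' v
    have := meetDepth_le_right u' v
    rw [treeDist, treeDist, parent, meetDepth_ancestor_left (by omega), ancestor_fst]
    omega
  · have := meetDepth_le_left u v
    have := meetDepth_le_right u v
    rw [treeDist, treeDist, parent, meetDepth_ancestor_left (by omega), ancestor_fst]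
    omega

theorem dist_eq (u v : Vert m d) : (fullAryTree m d).dist u v = treeDist u v := by
  set l := meetDepth u v
  obtain ⟨p, hp⟩ := exists_walk_ancestor u l
  obtain ⟨q, hq⟩ := exists_walk_ancestor v l
  have hmeet : ancestor u l = ancestor v l := (le_meetDepth_iff.1 le_rfl).2.2
  let w := p.append (q.reverse.copy hmeet.symm rfl)
  have hw : w.length = treeDist u v := by
    have := meetDepth_le_left u v
    have := meetDepth_le_right u v
    simp only [w, Walk.length_append, Walk.length_copy, Walk.length_reverse, hp, hq, treeDist]
    omega
  refine le_antisymm (hw ▸ dist_le w) ?_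
  obtain ⟨r, hr⟩ := Reachable.exists_walk_length_eq_dist ⟨w⟩
  have := r.le_add_length (f := (treeDist · v)) fun _ _ h => treeDist_le_of_adj h v
  rw [treeDist_self, hr] at this
  omega

theorem treeDist_parent_eq (v w : Vert m d) :
    treeDist w (parent v) = w.1 + (v.1 - 1) - 2 * min (meetDepth w v) (v.1 - 1) := by
  rw [treeDist, meetDepth_comm, parent, meetDepth_ancestor_left (Nat.sub_le _ _), meetDepth_comm,
    ancestor_fst, min_eq_left (Nat.sub_le (v.1 : ℕ) 1)]

theorem treeDist_parent_of_ancestor_eq {v w : Vert m d} (hv : (v.1 : ℕ) ≠ 0)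
    (h : ancestor w v.1 = v) : treeDist w (parent v) = treeDist w v + 1 := by
  have := meetDepth_eq_iff.2 h
  have := meetDepth_le_left w v
  rw [treeDist_parent_eq v w, treeDist]
  omega

theorem treeDist_parent_add_one {v w : Vert m d} (h : ancestor w v.1 ≠ v) :
    treeDist w (parent v) + 1 = treeDist w v := by
  have := mt meetDepth_eq_iff.1 h
  have := meetDepth_le_left w v
  have := meetDepth_le_right w v
  rw [treeDist_parent_eq v w, treeDist]
  omega

theorem ancestor_eq_iff {w v : Vert m d} :
    ancestor w v.1 = v ↔ (v.1 : ℕ) ≤ w.1 ∧ (w.2 : ℕ) / m ^ ((w.1 : ℕ) - v.1) = v.2 := by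
  constructor
  · intro h
    have h₁ := congrArg (fun x : Vert m d => (x.1 : ℕ)) h
    have h₂ := congrArg (fun x : Vert m d => (x.2 : ℕ)) h
    simp only [ancestor_fst, ancestor_snd] at h₁ h₂
    exact ⟨by omega, h₂⟩
  · rintro ⟨hl, hi⟩
    exact vert_ext (by simp [hl]) hi

theorem card_level_descendants (hm : 0 < m) (v : Vert m d) (i : ℕ) :
    #{w : Vert m d | (w.1 : ℕ) = i ∧ ancestor w v.1 = v} =
      if (v.1 : ℕ) ≤ i ∧ i ≤ d then m ^ (i - v.1) else 0 := by
  by_cases hid : i ≤ d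
  · set i' : Fin (d + 1) := ⟨i, by omega⟩
    rw [card_filter, Fintype.sum_sigma, Finset.sum_eq_single i']
    · simp only [i', true_and, ← card_filter, ancestor_eq_iff]
      by_cases hvi : (v.1 : ℕ) ≤ i
      · rw [if_pos ⟨hvi, hid⟩]
        simp only [hvi, true_and]
        refine Fin.card_filter_div_eq (pow_pos hm _) ?_
        calc ((v.2 : ℕ) + 1) * m ^ (i - v.1) ≤ m ^ (v.1 : ℕ) * m ^ (i - v.1) :=
                Nat.mul_le_mul_right _ v.2.2
            _ = m ^ i := by rw [← pow_add]; congr 1; omega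
      · simp [hvi]
    · intro j _ hj
      refine sum_eq_zero fun b _ => if_neg fun h => hj (Fin.ext h.1)
    · simp
  · rw [if_neg (by omega), card_eq_zero, filter_eq_empty_iff]
    intro w _ h
    have := w.1.2
    omega

theorem card_descendants (hm : 0 < m) (v : Vert m d) :
    #{w : Vert m d | ancestor w v.1 = v} = ∑ k ∈ range (d + 1 - v.1), m ^ k := by
  rw [card_eq_sum_card_fiberwise (f := fun w => (w.1 : ℕ)) (t := range (d + 1))
    fun w _ => by simpa using w.1.2]
  simp only [filter_filter, and_comm (a := ancestor _ _ = _), card_level_descendants hm]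
  rw [range_eq_Ico, ← sum_Ico_consecutive _ (Nat.zero_le v.1) (by omega : (v.1 : ℕ) ≤ d + 1),
    sum_eq_zero fun i hi => if_neg (by rw [mem_Ico] at hi; omega), zero_add, sum_Ico_eq_sum_range]
  refine sum_congr rfl fun k hk => ?_
  rw [mem_range] at hk
  rw [if_pos (by omega), Nat.add_sub_cancel_left]

theorem eq_parent_iff {u w : Vert m d} :
    ((w.1 : ℕ) ≠ 0 ∧ u = parent w) ↔ ((w.1 : ℕ) = u.1 + 1 ∧ ancestor w u.1 = u) := by
  constructor
  · rintro ⟨hw, rfl⟩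
    simp only [parent_fst]
    exact ⟨by omega, rfl⟩
  · rintro ⟨hw, h⟩
    refine ⟨by omega, ?_⟩
    rw [← h, parent]
    congr 1
    omega

theorem degree_eq (hm : 0 < m) (u : Vert m d) :
    (fullAryTree m d).degree u =
      (if (u.1 : ℕ) < d then m else 0) + if (u.1 : ℕ) = 0 then 0 else 1 := by
  have hsplit : (fullAryTree m d).neighborFinset u =
      ({w | (w.1 : ℕ) = u.1 + 1 ∧ ancestor w u.1 = u} : Finset (Vert m d)) ∪
        ({w | (u.1 : ℕ) ≠ 0 ∧ w = parent u} : Finset (Vert m d)) := by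
    ext w
    rw [mem_neighborFinset, adj_iff, eq_parent_iff]
    simp
  rw [← card_neighborFinset_eq_degree, hsplit, card_union_of_disjoint, card_level_descendants hm]
  · congr 1
    · have := u.1.2
      rw [Nat.add_sub_cancel_left, pow_one]
      split_ifs <;> omega
    · by_cases hu : (u.1 : ℕ) = 0 <;> simp [hu, filter_eq']
  · rw [disjoint_filter]
    rintro w - ⟨hw, -⟩ ⟨hu, rfl⟩
    simp only [parent_fst] at hw
    omega

theorem card_vert : Fintype.card (Vert m d) = ∑ k ∈ range (d + 1), m ^ k := by
  rw [Fintype.card_sigma]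
  simp only [Fintype.card_fin]
  exact Fin.sum_univ_eq_sum_range _ _

theorem edgeFinset_eq : (fullAryTree m d).edgeFinset =
    ({v : Vert m d | (v.1 : ℕ) ≠ 0} : Finset _).image fun v => s(parent v, v) := by
  ext e
  induction e using Sym2.ind with
  | h u v =>
    rw [mem_edgeFinset, mem_edgeSet, adj_iff]
    simp only [mem_image, mem_filter, mem_univ, true_and, Sym2.eq_iff]
    constructor
    · rintro (⟨hv, rfl⟩ | ⟨hu, rfl⟩)
      · exact ⟨v, hv, Or.inl ⟨rfl, rfl⟩⟩
      · exact ⟨u, hu, Or.inr ⟨rfl, rfl⟩⟩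
    · rintro ⟨x, hx, ⟨rfl, rfl⟩ | ⟨rfl, rfl⟩⟩
      · exact Or.inl ⟨hx, rfl⟩
      · exact Or.inr ⟨hx, rfl⟩

theorem sum_edgeFinset {M : Type*} [AddCommMonoid M] (f : Sym2 (Vert m d) → M) :
    ∑ e ∈ (fullAryTree m d).edgeFinset, f e =
      ∑ v ∈ ({v : Vert m d | (v.1 : ℕ) ≠ 0} : Finset _), f s(parent v, v) := by
  rw [edgeFinset_eq, sum_image]
  intro x hx y hy h
  rcases Sym2.eq_iff.1 h with ⟨-, h⟩ | ⟨h₁, h₂⟩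
  · exact h
  · have e₁ := congrArg (fun x : Vert m d => (x.1 : ℕ)) h₁
    have e₂ := congrArg (fun x : Vert m d => (x.1 : ℕ)) h₂
    simp only [parent_fst] at e₁ e₂
    simp only [coe_filter, Set.mem_ofPred_eq, mem_univ, true_and] at hx
    omega

theorem sum_nonroot_depth {M : Type*} [AddCommMonoid M] (g : ℕ → M) :
    ∑ v ∈ ({v : Vert m d | (v.1 : ℕ) ≠ 0} : Finset _), g v.1 =
      ∑ i ∈ range d, m ^ (i + 1) • g (i + 1) := by
  rw [sum_filter, Fintype.sum_sigma]
  simp only [sum_const, card_univ, Fintype.card_fin]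
  rw [Fin.sum_univ_succ]
  simp only [Fin.val_zero, ne_eq, not_true_eq_false, ite_false, smul_zero, zero_add,
    Fin.val_succ, Nat.add_one_ne_zero, not_false_eq_true, ite_true]
  exact Fin.sum_univ_eq_sum_range (fun i => m ^ (i + 1) • g (i + 1)) d

theorem sum_edgeFinset_of_depth {M : Type*} [AddCommMonoid M] {f : Sym2 (Vert m d) → M}
    (g : ℕ → M) (h : ∀ v : Vert m d, (v.1 : ℕ) ≠ 0 → f s(parent v, v) = g v.1) :
    ∑ e ∈ (fullAryTree m d).edgeFinset, f e = ∑ i ∈ range d, m ^ (i + 1) • g (i + 1) := by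
  rw [sum_edgeFinset, sum_congr rfl fun v hv => h v (by simpa using hv), sum_nonroot_depth]

theorem closerCount_child_parent (hm : 0 < m) {v : Vert m d} (hv : (v.1 : ℕ) ≠ 0) :
    closerCount (fullAryTree m d) v (parent v) = ∑ k ∈ range (d + 1 - v.1), m ^ k := by
  rw [← card_descendants hm, closerCount]
  congr 1
  refine filter_congr fun w _ => ?_
  rw [dist_eq, dist_eq]
  by_cases h : ancestor w v.1 = v
  · simp [h, treeDist_parent_of_ancestor_eq hv h]
  · simp [h, ← treeDist_parent_add_one h]

theorem closerCount_parent_child (hm : 0 < m) {v : Vert m d} (hv : (v.1 : ℕ) ≠ 0) :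
    closerCount (fullAryTree m d) (parent v) v =
      Fintype.card (Vert m d) - ∑ k ∈ range (d + 1 - v.1), m ^ k := by
  rw [← card_descendants hm, ← card_univ, ← card_filter_add_card_filter_not
    (fun w : Vert m d => ancestor w v.1 = v), closerCount, Nat.add_sub_cancel_left]
  congr 1
  refine filter_congr fun w _ => ?_
  rw [dist_eq, dist_eq]
  by_cases h : ancestor w v.1 = v
  · simp [h, treeDist_parent_of_ancestor_eq hv h]
  · simp [h, ← treeDist_parent_add_one h]

theorem irreg_eq (hm : 0 < m) (hd : 2 ≤ d) : irreg (fullAryTree m d) = m + m ^ (d + 1) := by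
  rw [irreg, sum_edgeFinset_of_depth (fun j => if j = 1 then (1 : ℤ) else if j = d then m else 0)
    fun v hv => ?_]
  · obtain ⟨e, rfl⟩ : ∃ e, d = e + 2 := ⟨d - 2, by omega⟩
    rw [sum_range_succ, sum_range_succ', sum_eq_zero fun i hi => ?_, if_pos rfl,
      if_neg (by omega), if_pos rfl]
    · push_cast
      ring
    · rw [if_neg (by omega), if_neg (by rw [mem_range] at hi; omega), smul_zero]
  · have := v.1.2
    rw [Sym2.lift_mk]
    dsimp only
    rw [degree_eq hm, degree_eq hm, parent_fst, abs_eq (by split_ifs <;> positivity)]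
    split_ifs <;> push_cast <;> omega

theorem mostar_eq_sum (hm : 2 ≤ m) : mostar (fullAryTree m d) =
    ∑ i ∈ range d, (m : ℤ) ^ (i + 1) *
      ((Fintype.card (Vert m d) : ℤ) - 2 * ∑ k ∈ range (d - i), (m : ℤ) ^ k) := by
  rw [mostar, sum_edgeFinset_of_depth
    (fun j => (Fintype.card (Vert m d) : ℤ) - 2 * ∑ k ∈ range (d + 1 - j), (m : ℤ) ^ k)
    fun v hv => ?_]
  · simp only [Nat.add_sub_add_right, nsmul_eq_mul]
    push_cast
    rfl
  · have hlt := Nat.two_mul_geomSum_lt hm (show d + 1 - v.1 < d + 1 by omega)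
    rw [← card_vert] at hlt
    rw [Sym2.lift_mk]
    dsimp only
    rw [closerCount_parent_child (by omega) hv, closerCount_child_parent (by omega) hv]
    have hcast : ∑ k ∈ range (d + 1 - v.1), (m : ℤ) ^ k =
        (∑ k ∈ range (d + 1 - v.1), m ^ k : ℕ) := by
      push_cast; rfl
    rw [hcast, Nat.cast_sub (by omega : _ ≤ Fintype.card (Vert m d)), abs_of_nonneg (by omega)]
    ring

end FullAryTree

theorem irreg_mostar_fullAryTree (m d : ℕ) (hm : 2 ≤ m) (hd : 2 ≤ d)
    (N : ℚ) (hN : N = ((m : ℚ) ^ (d + 1) - 1) / ((m : ℚ) - 1)) :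
    (Fintype.card ((i : Fin (d + 1)) × Fin (m ^ (i : ℕ))) : ℚ) = N ∧
    (irreg (fullAryTree m d) : ℚ) = (m : ℚ) + (m : ℚ) ^ (d + 1) ∧
    (mostar (fullAryTree m d) : ℚ) =
      N ^ 2 - N - 2 * (d : ℚ) * (N + 1 / ((m : ℚ) - 1)) + 2 / ((m : ℚ) - 1) * (N - 1) := by
  have hm1 : (m : ℚ) ≠ 1 := by exact_mod_cast (show m ≠ 1 by omega)
  have hcard : (Fintype.card ((i : Fin (d + 1)) × Fin (m ^ (i : ℕ))) : ℚ) = N := by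
    rw [FullAryTree.card_vert, hN, ← geom_sum_eq hm1]
    push_cast
    rfl
  refine ⟨hcard, by exact_mod_cast FullAryTree.irreg_eq (by omega) hd, ?_⟩
  rw [FullAryTree.mostar_eq_sum hm, ← sum_pow_mul_sub_two_geom_sum hm1 d hN]
  push_cast
  rw [hcard]
end
end

section
/- For all integers a ≥ 2 and b ≥ 1, setting n = 1 + ab, the balanced spider S_{a,b} satisfies Mo*(S_{a,b}) = (n−1)·(3abn − 5ab² − 3an + 3ab + 2a + 2b² − 9b + 6n − 5)/6. -/
open SimpleGraph Finset

attribute [local instance] Classical.propDecidable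

noncomputable section

/-!
For a vertex `w` at depth `t` on leg `i`, the leg together with the centre and any other leg is
a geodesic path, so `d(w, v) = |t - σᵢ v|` where `σᵢ` is the signed depth towards leg `i`.
Writing `n(u,v) - n(v,u) = ∑_w sign (d(w,v) - d(w,u))`, the contribution of leg `i` is a sum
over the points `1, …, b` of the integer line of
`sign (|s - y| - |s - x|) = sign (y - x) * sign (x + y - 2s)`, which is a clamped linear
function of `x + y`. This gives `|n(u,v) - n(v,u)|` in closed form for pairs centre–leg,
same leg and different legs, and summing the closed forms gives the formula.
-/

lemma Fintype.sum_ite_eq_add_mul {ι R : Type*} [Fintype ι] [DecidableEq ι] [Ring R] (i : ι)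
    (x y : R) : ∑ k, (if k = i then x else y) = x + (Fintype.card ι - 1) * y := by
  have hcompl : ∑ k ∈ {i}ᶜ, (if k = i then x else y) = ∑ k ∈ {i}ᶜ, y :=
    Finset.sum_congr rfl fun k hk => if_neg (by simpa using hk)
  rw [Fintype.sum_eq_add_sum_compl i, if_pos rfl, hcompl, Finset.sum_const, Finset.card_compl,
    Finset.card_singleton, nsmul_eq_mul, Nat.cast_sub (Fintype.card_pos_iff.mpr ⟨i⟩),
    Nat.cast_one]

lemma Fintype.sum_ite_eq_ite_eq_add_mul {ι R : Type*} [Fintype ι] [DecidableEq ι] [Ring R]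
    {i i' : ι} (h : i ≠ i') (x x' y : R) :
    ∑ k, (if k = i then x else if k = i' then x' else y) =
      x + x' + (Fintype.card ι - 2) * y := by
  have hsplit : ∀ k, (if k = i then x else if k = i' then x' else y) =
      (if k = i' then x' else y) + if k = i then x - y else 0 := fun k => by
    by_cases hk : k = i
    · subst hk; simp [h]
    · simp [hk]
  simp only [hsplit, Finset.sum_add_distrib, Fintype.sum_ite_eq_add_mul]
  noncomm_ring

lemma Fintype.sum_sum_ite_eq_zero {ι M : Type*} [Fintype ι] [DecidableEq ι] [AddCommGroup M]
    (g : ι → ι → M) :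
    ∑ i, ∑ j, (if i = j then 0 else g i j) = ∑ i, ∑ j, g i j - ∑ i, g i i := by
  rw [← Finset.sum_sub_distrib]
  refine Finset.sum_congr rfl fun i _ => ?_
  have hdiag := Finset.sum_ite_eq univ i (g i)
  rw [if_pos (mem_univ i)] at hdiag
  rw [← hdiag, ← Finset.sum_sub_distrib]
  exact Finset.sum_congr rfl fun j _ => by split_ifs <;> simp

lemma Finset.two_nsmul_sum_sym2_filter_not_isDiag {ι M : Type*} [AddCommMonoid M]
    (s : Finset ι) (f : ι → ι → M) (hf : ∀ i j, f i j = f j i) (hdiag : ∀ i, f i i = 0) :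
    2 • ∑ z ∈ s.sym2 with ¬z.IsDiag, Sym2.lift ⟨f, hf⟩ z = ∑ i ∈ s, ∑ j ∈ s, f i j := by
  let : LinearOrder ι := IsWellOrder.linearOrder WellOrderingRel
  have hlt : ∑ z ∈ s.sym2 with ¬z.IsDiag, Sym2.lift ⟨f, hf⟩ z =
      ∑ p ∈ s.offDiag with p.1 < p.2, f p.1 p.2 := by
    convert sum_sym2_filter_not_isDiag s (Sym2.lift ⟨f, hf⟩) using 2 <;> congr!
  have hgt : ∑ p ∈ s.offDiag with ¬p.1 < p.2, f p.1 p.2 =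
      ∑ p ∈ s.offDiag with p.1 < p.2, f p.1 p.2 := by
    refine sum_nbij' Prod.swap Prod.swap ?_ ?_ (fun _ _ => rfl) (fun _ _ => rfl)
      fun p _ => hf p.1 p.2
    all_goals
      intro p hp
      simp only [mem_filter, mem_offDiag, Prod.fst_swap, Prod.snd_swap, not_lt] at hp ⊢
      exact ⟨⟨hp.1.2.1, hp.1.1, Ne.symm hp.1.2.2⟩, by grind⟩
  have hoff : ∑ p ∈ s.offDiag, f p.1 p.2 = ∑ i ∈ s, ∑ j ∈ s, f i j := by
    rw [← sum_product']
    exact sum_subset (fun p hp => by simp_all) fun p _ hp => by simp_all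
  rw [two_nsmul, hlt, ← hoff]
  nth_rw 1 [← hgt]
  exact sum_filter_not_add_sum_filter _ _ _

lemma two_mul_sum_range_cast (m : ℕ) : 2 * ∑ j ∈ range m, (j : ℤ) = m * (m - 1) := by
  induction m with
  | zero => simp
  | succ m ih => rw [sum_range_succ, mul_add, ih]; push_cast; ring

lemma three_mul_sum_range_sum_range_abs_sub (m : ℕ) :
    3 * ∑ j ∈ range m, ∑ k ∈ range m, |(k : ℤ) - j| = m ^ 3 - m := by
  induction m with
  | zero => simp
  | succ m ih =>
    have hrow : ∑ j ∈ range m, |(m : ℤ) - j| = ∑ j ∈ range m, ((m : ℤ) - j) :=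
      sum_congr rfl fun j hj => abs_of_nonneg (by simp at hj; omega)
    have hcol : ∑ k ∈ range m, |(k : ℤ) - m| = ∑ k ∈ range m, ((m : ℤ) - k) :=
      sum_congr rfl fun k hk => by rw [abs_sub_comm]; exact abs_of_nonneg (by simp at hk; omega)
    simp only [sum_range_succ, sum_add_distrib, hrow, hcol, sub_self, abs_zero, sum_sub_distrib,
      sum_const, card_range, nsmul_eq_mul] at ih ⊢
    push_cast
    linear_combination ih - 3 * two_mul_sum_range_cast m

lemma two_mul_sum_fin_val (m : ℕ) : 2 * ∑ j : Fin m, ((j : ℕ) : ℤ) = m * (m - 1) := by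
  rw [Fin.sum_univ_eq_sum_range (fun j => (j : ℤ))]
  exact two_mul_sum_range_cast m

lemma three_mul_sum_fin_sum_fin_abs_sub (m : ℕ) :
    3 * ∑ j : Fin m, ∑ k : Fin m, |((k : ℕ) : ℤ) - (j : ℕ)| = m ^ 3 - m := by
  rw [← three_mul_sum_range_sum_range_abs_sub,
    ← Fin.sum_univ_eq_sum_range (fun j => ∑ k ∈ range m, |(k : ℤ) - j|)]
  congr 1
  exact sum_congr rfl fun j _ => Fin.sum_univ_eq_sum_range (fun k => |(k : ℤ) - (j : ℕ)|) m

lemma Int.sign_abs_sub_sub_abs_sub (s x y : ℤ) :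
    Int.sign (|s - y| - |s - x|) = Int.sign (y - x) * Int.sign (x + y - 2 * s) := by
  have hprod : (|s - y| - |s - x|) * (|s - y| + |s - x|) = (y - x) * (x + y - 2 * s) := by
    linear_combination sq_abs (s - y) - sq_abs (s - x)
  rw [← Int.sign_mul, ← hprod, Int.sign_mul]
  rcases (add_nonneg (abs_nonneg (s - y)) (abs_nonneg (s - x))).eq_or_lt with h | h
  · have hy : s - y = 0 := abs_eq_zero.mp (by linarith [abs_nonneg (s - y), abs_nonneg (s - x)])
    have hx : s - x = 0 := abs_eq_zero.mp (by linarith [abs_nonneg (s - y), abs_nonneg (s - x)])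
    simp [hx, hy]
  · rw [Int.sign_eq_one_of_pos h, mul_one]

lemma sum_range_sign_sub_two_mul (m : ℕ) (k : ℤ) :
    ∑ t ∈ range m, Int.sign (k - 2 * t) = max (-(m : ℤ)) (min (m : ℤ) (k + 1 - m)) := by
  induction m generalizing k with
  | zero => simp
  | succ m ih =>
    have hshift : ∑ t ∈ range m, Int.sign (k - 2 * ((t + 1 : ℕ) : ℤ)) =
        ∑ t ∈ range m, Int.sign ((k - 2) - 2 * t) :=
      sum_congr rfl fun t _ => by push_cast; ring_nf
    rw [sum_range_succ', hshift, ih, Nat.cast_zero, mul_zero, sub_zero]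
    rcases lt_trichotomy k 0 with h | rfl | h
    · rw [Int.sign_eq_neg_one_of_neg h]; omega
    · rw [Int.sign_zero]; omega
    · rw [Int.sign_eq_one_of_pos h]; omega

def segmentCloserDiff (m : ℕ) (x y : ℤ) : ℤ :=
  ∑ t ∈ range m, Int.sign (|t + 1 - y| - |t + 1 - x|)

lemma segmentCloserDiff_eq (m : ℕ) (x y : ℤ) :
    segmentCloserDiff m x y = Int.sign (y - x) * max (-(m : ℤ)) (min (m : ℤ) (x + y - 1 - m)) := by
  simp only [segmentCloserDiff, Int.sign_abs_sub_sub_abs_sub, ← mul_sum]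
  rw [sum_congr rfl fun (t : ℕ) _ => congrArg Int.sign (by ring : x + y - 2 * ((t : ℤ) + 1) =
    (x + y - 2) - 2 * t), sum_range_sign_sub_two_mul]
  congr 3
  ring

lemma SimpleGraph.Walk.abs_sub_le_length {V : Type*} {G : SimpleGraph V} {f : V → ℤ}
    (hf : ∀ ⦃u v⦄, G.Adj u v → |f u - f v| ≤ 1) {u v : V} (p : G.Walk u v) :
    |f u - f v| ≤ p.length := by
  induction p with
  | nil => simp
  | cons h p ih =>
    rw [length_cons, Nat.cast_succ]
    exact (abs_sub_le _ _ _).trans (by linarith [hf h])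

lemma SimpleGraph.Reachable.abs_sub_le_dist {V : Type*} {G : SimpleGraph V} {f : V → ℤ}
    (hf : ∀ ⦃u v⦄, G.Adj u v → |f u - f v| ≤ 1) {u v : V} (h : G.Reachable u v) :
    |f u - f v| ≤ G.dist u v := by
  obtain ⟨p, hp⟩ := h.exists_walk_length_eq_dist
  exact hp ▸ p.abs_sub_le_length hf

lemma SimpleGraph.exists_walk_length_eq_sub {V : Type*} {G : SimpleGraph V} {f : ℕ → V}
    {N : ℕ} (hf : ∀ n < N, G.Adj (f n) (f (n + 1))) {j k : ℕ} (hjk : j ≤ k) (hk : k ≤ N) :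
    ∃ p : G.Walk (f j) (f k), p.length = k - j := by
  induction k, hjk using Nat.le_induction with
  | base => exact ⟨.nil, by simp⟩
  | succ k hjk ih =>
    obtain ⟨p, hp⟩ := ih (by omega)
    exact ⟨p.concat (hf k (by omega)), by simp [hp]; omega⟩

def closerDiff {V : Type*} [Fintype V] (G : SimpleGraph V) (u v : V) : ℤ :=
  closerCount G u v - closerCount G v u

lemma closerDiff_self {V : Type*} [Fintype V] (G : SimpleGraph V) (u : V) :
    closerDiff G u u = 0 :=
  sub_self _

lemma closerDiff_swap {V : Type*} [Fintype V] (G : SimpleGraph V) (u v : V) :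
    closerDiff G v u = -closerDiff G u v :=
  (neg_sub _ _).symm

lemma two_mul_totalMostar {V : Type*} [Fintype V] (G : SimpleGraph V) :
    2 * totalMostar G = ∑ u, ∑ v, |closerDiff G u v| := by
  rw [totalMostar, two_mul, ← two_nsmul, two_nsmul_sum_sym2_filter_not_isDiag _ _ _ (by simp)]
  rfl

lemma closerDiff_eq_sum_sign {V : Type*} [Fintype V] (G : SimpleGraph V) (u v : V) :
    closerDiff G u v = ∑ w, Int.sign ((G.dist w v : ℤ) - G.dist w u) := by
  simp only [closerDiff, closerCount, card_filter, Nat.cast_sum, Nat.cast_ite, Nat.cast_one,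
    Nat.cast_zero, ← sum_sub_distrib]
  refine sum_congr rfl fun w _ => ?_
  rcases lt_trichotomy (G.dist w u) (G.dist w v) with h | h | h
  · simp [h, h.not_gt, Int.sign_eq_one_of_pos]
  · simp [h]
  · simp [h, h.not_gt, Int.sign_eq_neg_one_of_neg]

section BalancedSpider

variable {a b : ℕ}

local notation "𝕊" => spider a fun _ => b

lemma spider_adj_none_some (i : Fin a) (j : Fin b) (hj : (j : ℕ) = 0) :
    (𝕊).Adj none (some ⟨i, j⟩) := by
  rw [spider, fromRel_adj]
  exact ⟨by simp, .inl (.inl ⟨i, j, rfl, rfl, hj⟩)⟩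

lemma spider_adj_some_some (i : Fin a) (j j' : Fin b) (h : (j' : ℕ) = j + 1) :
    (𝕊).Adj (some ⟨i, j⟩) (some ⟨i, j'⟩) := by
  rw [spider, fromRel_adj]
  refine ⟨fun he => ?_, .inl (.inr ⟨i, j, j', rfl, rfl, h⟩)⟩
  simp only [Option.some.injEq, Sigma.mk.injEq, heq_eq_eq, true_and] at he
  omega

/-- The vertex at distance `p` from the centre on leg `i` (junk value `none` for `p > b`). -/
def legVertex (i : Fin a) : ℕ → Option ((_ : Fin a) × Fin b)
  | 0 => none
  | p + 1 => if h : p < b then some ⟨i, ⟨p, h⟩⟩ else none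

lemma legVertex_succ (i : Fin a) (t : Fin b) : legVertex i (t + 1) = some ⟨i, t⟩ := by
  simp [legVertex]

lemma spider_adj_legVertex (i : Fin a) {p : ℕ} (hp : p < b) :
    (𝕊).Adj (legVertex i p) (legVertex i (p + 1)) := by
  cases p with
  | zero => simpa [legVertex, hp] using spider_adj_none_some i ⟨0, hp⟩ rfl
  | succ q =>
    simpa [legVertex, hp, show q < b by omega] using
      spider_adj_some_some i ⟨q, by omega⟩ ⟨q + 1, hp⟩ rfl

lemma spider_dist_legVertex_le (i : Fin a) {p q : ℕ} (hpq : p ≤ q) (hq : q ≤ b) :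
    (𝕊).dist (legVertex i p) (legVertex i q) ≤ q - p := by
  obtain ⟨w, hw⟩ := exists_walk_length_eq_sub (fun _ => spider_adj_legVertex i) hpq hq
  exact hw ▸ dist_le w

lemma spider_connected : (𝕊).Connected := by
  rw [connected_iff_exists_forall_reachable]
  refine ⟨none, ?_⟩
  rintro (_ | ⟨i, t⟩)
  · rfl
  · obtain ⟨w, -⟩ := exists_walk_length_eq_sub (fun _ => spider_adj_legVertex i)
      (Nat.zero_le (t + 1)) t.isLt
    exact legVertex_succ i t ▸ ⟨w⟩

/-- Coordinate along the path formed by leg `i` and any other leg, oriented towards leg `i`. -/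
def signedDepth (i : Fin a) : Option ((_ : Fin a) × Fin b) → ℤ
  | none => 0
  | some x => if x.1 = i then (x.2 : ℕ) + 1 else -((x.2 : ℕ) + 1)

lemma signedDepth_none (i : Fin a) : signedDepth i (none : Option ((_ : Fin a) × Fin b)) = 0 :=
  rfl

lemma signedDepth_some_self (i : Fin a) (t : Fin b) :
    signedDepth i (some ⟨i, t⟩) = (t : ℕ) + 1 :=
  if_pos rfl

lemma signedDepth_some_of_ne {i i' : Fin a} (h : i' ≠ i) (t : Fin b) :
    signedDepth i (some ⟨i', t⟩) = -((t : ℕ) + 1) :=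
  if_neg h

lemma abs_signedDepth_sub_le_one (i : Fin a) {u v : Option ((_ : Fin a) × Fin b)}
    (h : (𝕊).Adj u v) : |signedDepth i u - signedDepth i v| ≤ 1 := by
  rw [spider, fromRel_adj] at h
  obtain ⟨-, h | h⟩ := h <;>
  · rcases h with ⟨i', j, rfl, rfl, hj⟩ | ⟨i', j, j', rfl, rfl, hj⟩ <;>
    · simp only [signedDepth]
      split_ifs <;> rw [abs_le] <;> omega

lemma spider_dist_some_none_le (i : Fin a) (t : Fin b) :
    (𝕊).dist (some ⟨i, t⟩) none ≤ (t : ℕ) + 1 := by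
  have := spider_dist_legVertex_le i (Nat.zero_le (t + 1)) t.isLt
  rwa [legVertex_succ, SimpleGraph.dist_comm] at this

lemma spider_dist_some (i : Fin a) (t : Fin b) (v : Option ((_ : Fin a) × Fin b)) :
    ((𝕊).dist (some ⟨i, t⟩) v : ℤ) = |t + 1 - signedDepth i v| := by
  refine le_antisymm ?_ ?_
  · rcases v with _ | ⟨i', s⟩
    · rw [signedDepth_none, sub_zero, abs_of_nonneg (by omega)]
      exact_mod_cast spider_dist_some_none_le i t
    by_cases hi : i' = i
    · subst hi
      rw [signedDepth_some_self]
      rcases le_total (t : ℕ) s with h | h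
      · have := spider_dist_legVertex_le i' (Nat.succ_le_succ h) s.isLt
        rw [legVertex_succ, legVertex_succ] at this
        rw [abs_sub_comm, abs_of_nonneg (by omega)]
        omega
      · have := spider_dist_legVertex_le i' (Nat.succ_le_succ h) t.isLt
        rw [legVertex_succ, legVertex_succ, SimpleGraph.dist_comm] at this
        rw [abs_of_nonneg (by omega)]
        omega
    · have := spider_connected.dist_triangle (u := some ⟨i, t⟩) (v := none) (w := some ⟨i', s⟩)
      rw [SimpleGraph.dist_comm (u := none)] at this
      rw [signedDepth_some_of_ne hi, abs_of_nonneg (by omega)]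
      have := spider_dist_some_none_le i t
      have := spider_dist_some_none_le i' s
      omega
  · have := (spider_connected.preconnected (some ⟨i, t⟩) v).abs_sub_le_dist
      (fun _ _ h => abs_signedDepth_sub_le_one i h)
    rwa [signedDepth_some_self] at this

lemma spider_dist_none_some (i : Fin a) (s : Fin b) :
    ((𝕊).dist none (some ⟨i, s⟩) : ℤ) = (s : ℕ) + 1 := by
  rw [SimpleGraph.dist_comm, spider_dist_some, signedDepth_none, sub_zero,
    abs_of_nonneg (by positivity)]

lemma closerDiff_spider (u v : Option ((_ : Fin a) × Fin b)) :
    closerDiff 𝕊 u v = Int.sign (((𝕊).dist none v : ℤ) - (𝕊).dist none u) +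
      ∑ i, segmentCloserDiff b (signedDepth i u) (signedDepth i v) := by
  rw [closerDiff_eq_sum_sign, Fintype.sum_option, Fintype.sum_sigma]
  congr 1
  refine sum_congr rfl fun i _ => ?_
  simp only [spider_dist_some, segmentCloserDiff]
  exact Fin.sum_univ_eq_sum_range
    (fun t => Int.sign (|(t : ℤ) + 1 - signedDepth i v| - |(t : ℤ) + 1 - signedDepth i u|)) b

lemma closerDiff_spider_none_some (i : Fin a) (j : Fin b) :
    closerDiff 𝕊 none (some ⟨i, j⟩) = ((a : ℤ) - 2) * b + (j : ℕ) + 1 := by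
  have hj := j.isLt
  have hleg : ∀ k, segmentCloserDiff b (signedDepth k (none : Option ((_ : Fin a) × Fin b)))
      (signedDepth k (some ⟨i, j⟩)) = if k = i then ((j : ℕ) : ℤ) - b else b := fun k => by
    rw [segmentCloserDiff_eq, signedDepth_none]
    split_ifs with hk
    · rw [hk, signedDepth_some_self, Int.sign_eq_one_of_pos (by omega)]; omega
    · rw [signedDepth_some_of_ne (Ne.symm hk), Int.sign_eq_neg_one_of_neg (by omega)]; omega
  rw [closerDiff_spider, Fintype.sum_congr _ _ hleg, Fintype.sum_ite_eq_add_mul,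
    spider_dist_none_some, SimpleGraph.dist_self, Int.sign_eq_one_of_pos (by omega)]
  simp only [Fintype.card_fin]
  ring

lemma closerDiff_spider_some_some_self (i : Fin a) (j j' : Fin b) :
    closerDiff 𝕊 (some ⟨i, j⟩) (some ⟨i, j'⟩) =
      Int.sign (((j' : ℕ) : ℤ) - (j : ℕ)) * (((a : ℤ) - 2) * b + (j : ℕ) + (j' : ℕ) + 2) := by
  have hj := j.isLt
  have hj' := j'.isLt
  have hleg : ∀ k, segmentCloserDiff b (signedDepth k (some ⟨i, j⟩))
      (signedDepth k (some ⟨i, j'⟩)) = Int.sign (((j' : ℕ) : ℤ) - (j : ℕ)) *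
        if k = i then ((j : ℕ) : ℤ) + (j' : ℕ) + 1 - b else (b : ℤ) := fun k => by
    rw [segmentCloserDiff_eq]
    split_ifs with hk
    · rw [hk, signedDepth_some_self, signedDepth_some_self]
      congr 1
      · ring_nf
      · omega
    · rw [signedDepth_some_of_ne (Ne.symm hk), signedDepth_some_of_ne (Ne.symm hk),
        show -(((j' : ℕ) : ℤ) + 1) - -(((j : ℕ) : ℤ) + 1) = -(((j' : ℕ) : ℤ) - (j : ℕ)) by ring,
        Int.sign_neg,
        show max (-(b : ℤ)) (min (b : ℤ) (-(((j : ℕ) : ℤ) + 1) + -(((j' : ℕ) : ℤ) + 1) - 1 - b)) =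
          -b by omega]
      ring
  rw [closerDiff_spider, Fintype.sum_congr _ _ hleg, ← mul_sum, Fintype.sum_ite_eq_add_mul,
    spider_dist_none_some, spider_dist_none_some, add_sub_add_right_eq_sub, Fintype.card_fin]
  ring

lemma closerDiff_spider_some_some_of_ne {i i' : Fin a} (hi : i ≠ i') (j j' : Fin b) :
    closerDiff 𝕊 (some ⟨i, j⟩) (some ⟨i', j'⟩) =
      Int.sign (((j' : ℕ) : ℤ) - (j : ℕ)) * (((a : ℤ) - 2) * b + |((j' : ℕ) : ℤ) - (j : ℕ)|) := by
  have hj := j.isLt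
  have hj' := j'.isLt
  have hleg : ∀ k, segmentCloserDiff b (signedDepth k (some ⟨i, j⟩))
      (signedDepth k (some ⟨i', j'⟩)) =
        if k = i then -max (-(b : ℤ)) ((j : ℕ) - (j' : ℕ) - 1 - b)
        else if k = i' then max (-(b : ℤ)) ((j' : ℕ) - (j : ℕ) - 1 - b)
        else Int.sign (((j' : ℕ) : ℤ) - (j : ℕ)) * b := fun k => by
    rw [segmentCloserDiff_eq]
    split_ifs with hk hk'
    · rw [hk, signedDepth_some_self, signedDepth_some_of_ne (Ne.symm hi),
        Int.sign_eq_neg_one_of_neg (by omega)]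
      omega
    · rw [hk', signedDepth_some_self, signedDepth_some_of_ne hi,
        Int.sign_eq_one_of_pos (by omega)]
      omega
    · rw [signedDepth_some_of_ne (Ne.symm hk), signedDepth_some_of_ne (Ne.symm hk'),
        show -(((j' : ℕ) : ℤ) + 1) - -(((j : ℕ) : ℤ) + 1) = -(((j' : ℕ) : ℤ) - (j : ℕ)) by ring,
        Int.sign_neg,
        show max (-(b : ℤ)) (min (b : ℤ) (-(((j : ℕ) : ℤ) + 1) + -(((j' : ℕ) : ℤ) + 1) - 1 - b)) =
          -b by omega]
      ring
  rw [closerDiff_spider, Fintype.sum_congr _ _ hleg, Fintype.sum_ite_eq_ite_eq_add_mul hi,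
    spider_dist_none_some, spider_dist_none_some, add_sub_add_right_eq_sub, Fintype.card_fin]
  rcases lt_trichotomy (j : ℕ) (j' : ℕ) with h | h | h
  · rw [Int.sign_eq_one_of_pos (by omega), abs_of_pos (by omega),
      max_eq_left (by omega), max_eq_right (by omega)]
    ring
  · simp [h]
  · rw [Int.sign_eq_neg_one_of_neg (by omega), abs_of_neg (by omega),
      max_eq_right (by omega), max_eq_left (by omega)]
    ring

lemma abs_closerDiff_spider_none_some (ha : 2 ≤ a) (i : Fin a) (j : Fin b) :
    |closerDiff 𝕊 none (some ⟨i, j⟩)| = ((a : ℤ) - 2) * b + (j : ℕ) + 1 := by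
  have hc : 0 ≤ ((a : ℤ) - 2) * b := mul_nonneg (by omega) (Nat.cast_nonneg b)
  rw [closerDiff_spider_none_some, abs_of_nonneg (by positivity)]

lemma abs_closerDiff_spider_some_some (ha : 2 ≤ a) (i i' : Fin a) (j j' : Fin b) :
    |closerDiff 𝕊 (some ⟨i, j⟩) (some ⟨i', j'⟩)| =
      if i' = i then (if j = j' then 0 else ((a : ℤ) - 2) * b + (j : ℕ) + (j' : ℕ) + 2)
      else (if j = j' then 0 else ((a : ℤ) - 2) * b + |((j' : ℕ) : ℤ) - (j : ℕ)|) := by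
  have hc : 0 ≤ ((a : ℤ) - 2) * b := mul_nonneg (by omega) (Nat.cast_nonneg b)
  split_ifs with hi hj hj
  · simp [hi, hj, closerDiff_spider_some_some_self]
  · rw [hi, closerDiff_spider_some_some_self, abs_mul, Int.abs_sign_of_ne_zero (by omega),
      one_mul, abs_of_nonneg (by positivity)]
  · simp [closerDiff_spider_some_some_of_ne (Ne.symm hi), hj]
  · rw [closerDiff_spider_some_some_of_ne (Ne.symm hi), abs_mul,
      Int.abs_sign_of_ne_zero (by omega), one_mul, abs_of_nonneg (by positivity)]

lemma sum_sum_abs_closerDiff_spider (ha : 2 ≤ a) :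
    ∑ u, ∑ v, |closerDiff 𝕊 u v| =
      2 * a * ∑ j : Fin b, (((a : ℤ) - 2) * b + (j : ℕ) + 1) +
      a * ∑ j : Fin b, ∑ j' : Fin b,
        (if j = j' then 0 else ((a : ℤ) - 2) * b + (j : ℕ) + (j' : ℕ) + 2) +
      a * (a - 1) * ∑ j : Fin b, ∑ j' : Fin b,
        (if j = j' then 0 else ((a : ℤ) - 2) * b + |((j' : ℕ) : ℤ) - (j : ℕ)|) := by
  simp only [Fintype.sum_option, Fintype.sum_sigma, closerDiff_self, abs_zero,
    closerDiff_swap _ none (some _), abs_neg,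
    abs_closerDiff_spider_none_some ha, abs_closerDiff_spider_some_some ha, Finset.sum_ite_irrel,
    Fintype.sum_ite_eq_add_mul]
  simp only [sum_add_distrib, sum_const, card_univ, Fintype.card_fin, nsmul_eq_mul, ← mul_sum]
  ring

lemma six_mul_totalMostar_spider (ha : 2 ≤ a) :
    6 * totalMostar 𝕊 = (a * b : ℤ) * (3 * a * b * (a * b + 1) - 5 * a * b ^ 2 -
      3 * a * (a * b + 1) + 3 * a * b + 2 * a + 2 * b ^ 2 - 9 * b + 6 * (a * b + 1) - 5) := by
  have htotal := two_mul_totalMostar 𝕊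
  rw [sum_sum_abs_closerDiff_spider ha, Fintype.sum_sum_ite_eq_zero,
    Fintype.sum_sum_ite_eq_zero] at htotal
  simp only [sum_add_distrib, sum_const, card_univ, Fintype.card_fin, nsmul_eq_mul, ← mul_sum,
    sub_self, abs_zero] at htotal
  linear_combination 3 * htotal + 3 * a * b * two_mul_sum_fin_val b +
    a * (a - 1) * three_mul_sum_fin_sum_fin_abs_sub b

end BalancedSpider

theorem totalMostar_balancedSpider_general (a b : ℕ) (ha : 2 ≤ a)
    (n : ℕ) (hn : n = 1 + a * b) :
    (totalMostar (spider a fun _ => b) : ℚ) =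
      ((n : ℚ) - 1) * (3 * (a : ℚ) * b * n - 5 * a * (b : ℚ) ^ 2 - 3 * a * n + 3 * a * b
        + 2 * a + 2 * (b : ℚ) ^ 2 - 9 * b + 6 * n - 5) / 6 := by
  have h := congrArg (Int.cast : ℤ → ℚ) (six_mul_totalMostar_spider (b := b) ha)
  subst hn
  push_cast at h ⊢
  linear_combination h / 6

theorem totalMostar_balancedSpider (a b : ℕ) (ha : 2 ≤ a) (hb : 1 ≤ b)
    (n : ℕ) (hn : n = 1 + a * b) :
    (totalMostar (spider a fun _ => b) : ℚ) =
      ((n : ℚ) - 1) * (3 * (a : ℚ) * b * n - 5 * a * (b : ℚ) ^ 2 - 3 * a * n + 3 * a * b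
        + 2 * a + 2 * (b : ℚ) ^ 2 - 9 * b + 6 * n - 5) / 6 :=
  totalMostar_balancedSpider_general a b ha n hn
end
end

section
/- For the path P_n on n vertices, spr(P_n) = n²(n−1)/2 − (n/2)·(n/2 − 1) when n is even, and spr(P_n) = n²(n−1)/2 − (n−1)²/4 when n is odd. -/
open SimpleGraph Finset

attribute [local instance] Classical.propDecidable

noncomputable section

/-
For every pair `u, v`, each vertex is strictly closer to `u`, strictly closer to `v`, or
equidistant, so `n(u,v) + n(v,u) = |V| - #{w | d(w,u) = d(w,v)}`. Summing over all ordered pairs,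
`2 spr(G) = |V|³ - #{(u, v, w) | d(w,u) = d(w,v)}`. In `P_n` the distance is `|i - j|`, so the
equidistant triples are the `n²` with `u = v` together with, for each pair `u ≠ v` of equal
parity, its midpoint; there are `(n² + n mod 2) / 2 - n` such ordered pairs.
-/

def equidistantCount {V : Type*} [Fintype V] (G : SimpleGraph V) (u v : V) : ℕ :=
  #{w | G.dist w u = G.dist w v}

section General

variable {V : Type*} [Fintype V] (G : SimpleGraph V)

lemma closerCount_self (v : V) : closerCount G v v = 0 := by
  simp [closerCount]

lemma sprVertex_eq_sum_closerCount (v : V) : sprVertex G v = ∑ u, closerCount G u v :=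
  sum_erase _ (closerCount_self G v)

lemma closerCount_add_closerCount_add_equidistantCount (u v : V) :
    closerCount G u v + closerCount G v u + equidistantCount G u v = Fintype.card V := by
  simp only [closerCount, equidistantCount, card_filter]
  rw [← sum_add_distrib, ← sum_add_distrib, ← card_univ, card_eq_sum_ones]
  refine sum_congr rfl fun w _ => ?_
  split_ifs <;> omega

lemma two_mul_spr_add_sum_equidistantCount :
    2 * spr G + ∑ u, ∑ v, equidistantCount G u v = Fintype.card V ^ 3 := by
  have hspr : spr G = ∑ u, ∑ v, closerCount G v u := by
    simp only [spr, sprVertex_eq_sum_closerCount]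
  calc 2 * spr G + ∑ u, ∑ v, equidistantCount G u v
      = ∑ u, ∑ v, (closerCount G u v + closerCount G v u + equidistantCount G u v) := by
        rw [two_mul]
        nth_rw 1 [hspr, sum_comm]
        simp only [hspr, sum_add_distrib]
    _ = Fintype.card V ^ 3 := by
        simp [closerCount_add_closerCount_add_equidistantCount, pow_succ, mul_assoc]

end General

lemma sum_range_ite_add_mod_two_eq_zero (u n : ℕ) :
    ∑ v ∈ range n, (if (u + v) % 2 = 0 then 1 else 0) = (n + 1 - u % 2) / 2 := by
  induction n with
  | zero => rw [sum_range_zero]; omega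
  | succ n ih =>
    rw [sum_range_succ, ih]
    split_ifs <;> omega

lemma two_mul_sum_range_sum_range_ite_add_mod_two_eq_zero (n : ℕ) :
    2 * ∑ u ∈ range n, ∑ v ∈ range n, (if (u + v) % 2 = 0 then 1 else 0) = n ^ 2 + n % 2 := by
  induction n with
  | zero => simp
  | succ n ih =>
    have hrow := sum_range_ite_add_mod_two_eq_zero n n
    have hcol : ∑ u ∈ range n, (if (u + n) % 2 = 0 then 1 else 0) = (n + 1 - n % 2) / 2 := by
      simpa only [add_comm n] using hrow
    simp only [sum_range_succ, sum_add_distrib, hcol, hrow]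
    rw [if_pos (by omega), show (n + 1) ^ 2 = n ^ 2 + 2 * n + 1 by ring]
    omega

namespace SimpleGraph

variable {n : ℕ}

lemma natDist_le_length_of_walk_pathGraph {u v : Fin n} (p : (pathGraph n).Walk u v) :
    Nat.dist u v ≤ p.length := by
  induction p with
  | nil => simp
  | cons h _ ih =>
    rw [pathGraph_adj] at h
    simp only [Walk.length_cons, Nat.dist] at ih ⊢
    omega

lemma dist_pathGraph_le_of_val_eq_add (u : Fin n) :
    ∀ (k : ℕ) (w : Fin n), (w : ℕ) = u + k → (pathGraph n).dist u w ≤ k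
  | 0, w, h => by simp [Fin.ext (h.trans (Nat.add_zero _))]
  | k + 1, w, h => by
    let v : Fin n := ⟨u + k, by omega⟩
    have hvw : (pathGraph n).Adj v w := pathGraph_adj.2 (Or.inl (by change (u : ℕ) + k + 1 = w; omega))
    calc (pathGraph n).dist u w ≤ (pathGraph n).dist u v + (pathGraph n).dist v w :=
          hvw.reachable.dist_triangle_right u
      _ ≤ k + 1 := by
          rw [dist_eq_one_iff_adj.2 hvw]
          grw [dist_pathGraph_le_of_val_eq_add u k v rfl]

theorem dist_pathGraph (u v : Fin n) : (pathGraph n).dist u v = Nat.dist u v := by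
  refine le_antisymm ?_ ?_
  · rcases le_total (u : ℕ) v with h | h
    · exact dist_pathGraph_le_of_val_eq_add u _ v (by rw [Nat.dist_eq_sub_of_le h]; omega)
    · rw [dist_comm, Nat.dist_comm]
      exact dist_pathGraph_le_of_val_eq_add v _ u (by rw [Nat.dist_eq_sub_of_le h]; omega)
  · obtain ⟨p, hp⟩ := (pathGraph_preconnected n u v).exists_walk_length_eq_dist
    exact hp ▸ natDist_le_length_of_walk_pathGraph p

-- The indicator of `u = v` is added on both sides so that `n - 1` need not be written in `ℕ`.
lemma equidistantCount_pathGraph_add_ite (u v : Fin n) :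
    equidistantCount (pathGraph n) u v + (if u = v then 1 else 0) =
      (if u = v then n else 0) + if (u + v : ℕ) % 2 = 0 then 1 else 0 := by
  simp only [equidistantCount, dist_pathGraph]
  by_cases huv : u = v
  · subst huv
    rw [if_pos rfl, if_pos rfl, if_pos (by omega), filter_true_of_mem fun _ _ => rfl, card_univ,
      Fintype.card_fin]
  · have hne : (u : ℕ) ≠ v := Fin.val_ne_of_ne huv
    rw [if_neg huv, if_neg huv]
    split_ifs with hpar
    · rw [add_zero, zero_add]
      refine card_eq_one.2 ⟨(⟨(u + v) / 2, by omega⟩ : Fin n), ?_⟩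
      ext w
      rw [mem_filter]
      simp only [mem_univ, true_and, mem_singleton, Fin.ext_iff, Nat.dist]
      omega
    · rw [add_zero, card_eq_zero, filter_eq_empty_iff]
      intro w _
      simp only [Nat.dist]
      omega

lemma sum_sum_equidistantCount_pathGraph_add (n : ℕ) :
    ∑ u, ∑ v, equidistantCount (pathGraph n) u v + n =
      n ^ 2 + ∑ u ∈ range n, ∑ v ∈ range n, (if (u + v) % 2 = 0 then 1 else 0) := by
  have h := Fintype.sum_congr _ _ fun u : Fin n =>
    Fintype.sum_congr _ _ fun v => equidistantCount_pathGraph_add_ite u v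
  simp only [sum_add_distrib, sum_ite_eq, mem_univ, if_true, sum_const, card_univ,
    Fintype.card_fin, smul_eq_mul, mul_one] at h
  rw [h, sq]
  simp only [sum_range]

theorem four_mul_spr_pathGraph_add (n : ℕ) :
    4 * spr (pathGraph n) + 3 * n ^ 2 + n % 2 = 2 * n ^ 3 + 2 * n := by
  have hspr := two_mul_spr_add_sum_equidistantCount (pathGraph n)
  have heq := sum_sum_equidistantCount_pathGraph_add n
  have hpar := two_mul_sum_range_sum_range_ite_add_mod_two_eq_zero n
  rw [Fintype.card_fin] at hspr
  omega

end SimpleGraph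

theorem spr_pathGraph (n : ℕ) :
    (Even n → (spr (SimpleGraph.pathGraph n) : ℚ) =
      (n : ℚ) ^ 2 * ((n : ℚ) - 1) / 2 - ((n : ℚ) / 2) * ((n : ℚ) / 2 - 1)) ∧
    (Odd n → (spr (SimpleGraph.pathGraph n) : ℚ) =
      (n : ℚ) ^ 2 * ((n : ℚ) - 1) / 2 - ((n : ℚ) - 1) ^ 2 / 4) := by
  have h : (4 * spr (pathGraph n) + 3 * n ^ 2 + (n % 2 : ℕ) : ℚ) = 2 * n ^ 3 + 2 * n := by
    exact_mod_cast four_mul_spr_pathGraph_add n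
  refine ⟨fun hn => ?_, fun hn => ?_⟩
  · rw [Nat.even_iff.1 hn, Nat.cast_zero] at h
    linear_combination h / 4
  · rw [Nat.odd_iff.1 hn, Nat.cast_one] at h
    linear_combination h / 4
end
end

section
/- For the cycle C_n on n ≥ 3 vertices, spr(C_n) = n²(n−1)/2 − n(n−2)/2 when n is even, and spr(C_n) = n²(n−1)/2 − n(n−1)/2 when n is odd. -/
open SimpleGraph Finset

attribute [local instance] Classical.propDecidable

noncomputable section

/-! Summing over the vertex `w` from which distances are measured, the pairs `(u, v)` with
`d(w, u) < d(w, v)` are counted by `spr G`, and the pairs with `d(w, u) > d(w, v)` are equally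
many; hence `2 spr(G) + Σ_w #{(u, v) | d(w, u) = d(w, v)} = n³` for every graph on `n` vertices.
In `C_n` the distance from `w` to `u` is the circular norm of `u - w`, whose level sets are the
pairs `{a, -a}`; so every `w` sees `2n - s` equidistant pairs, where `s` is the number of
solutions of `a = -a` in `ℤ/n`: two when `n` is even, one when it is odd. Therefore
`2 spr(C_n) = n³ - 2n² + s n`. -/

lemma two_mul_card_lt_add_card_eq {α β : Type*} [Fintype α] [LinearOrder β] (f : α → β) :
    2 * #{p : α × α | f p.1 < f p.2} + #{p : α × α | f p.1 = f p.2} = Fintype.card α ^ 2 := by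
  have hswap : #{p : α × α | f p.1 < f p.2} = #{p : α × α | f p.2 < f p.1} :=
    card_equiv (Equiv.prodComm α α) (by simp)
  calc 2 * #{p : α × α | f p.1 < f p.2} + #{p : α × α | f p.1 = f p.2}
      = ∑ p : α × α, ((if f p.1 < f p.2 then 1 else 0) + (if f p.2 < f p.1 then 1 else 0) +
          (if f p.1 = f p.2 then 1 else 0)) := by
        rw [two_mul]
        nth_rw 2 [hswap]
        simp only [card_filter, sum_add_distrib]
    _ = ∑ _p : α × α, 1 := by
        refine sum_congr rfl fun p _ => ?_
        rcases lt_trichotomy (f p.1) (f p.2) with h | h | h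
        · simp [h, h.not_gt, h.ne]
        · simp [h]
        · simp [h, h.not_gt, h.ne']
    _ = Fintype.card α ^ 2 := by simp [sq]

namespace SimpleGraph

section Lipschitz

variable {V : Type*} {G : SimpleGraph V} {f : V → ℕ}

lemma Walk.le_add_length_of_forall_adj (hf : ∀ x y, G.Adj x y → f y ≤ f x + 1)
    {u v : V} (p : G.Walk u v) : f v ≤ f u + p.length := by
  induction p with
  | nil => simp
  | cons h p ih => have := hf _ _ h; rw [Walk.length_cons]; omega

lemma Reachable.le_add_dist_of_forall_adj (hf : ∀ x y, G.Adj x y → f y ≤ f x + 1)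
    {u v : V} (h : G.Reachable u v) : f v ≤ f u + G.dist u v := by
  obtain ⟨p, hp⟩ := h.exists_walk_length_eq_dist
  exact hp ▸ p.le_add_length_of_forall_adj hf

end Lipschitz

section SumPeripherality

variable {V : Type*} [Fintype V] (G : SimpleGraph V)

lemma closerCount_self (v : V) : closerCount G v v = 0 := by
  simp [closerCount]

lemma sprVertex_eq_sum_closerCount (v : V) : sprVertex G v = ∑ u, closerCount G u v :=
  sum_erase _ (closerCount_self G v)

lemma spr_eq_sum_card_dist_lt :
    spr G = ∑ w, #{p : V × V | G.dist w p.1 < G.dist w p.2} := by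
  simp only [spr, sprVertex_eq_sum_closerCount, closerCount, card_filter, Fintype.sum_prod_type]
  rw [sum_comm]
  exact (sum_congr rfl fun _ _ => sum_comm).trans sum_comm

lemma two_mul_spr_add_sum_card_dist_eq :
    2 * spr G + ∑ w, #{p : V × V | G.dist w p.1 = G.dist w p.2} = Fintype.card V ^ 3 := by
  calc 2 * spr G + ∑ w, #{p : V × V | G.dist w p.1 = G.dist w p.2}
      = ∑ w, (2 * #{p : V × V | G.dist w p.1 < G.dist w p.2} +
          #{p : V × V | G.dist w p.1 = G.dist w p.2}) := by
        rw [spr_eq_sum_card_dist_lt, mul_sum, sum_add_distrib]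
    _ = ∑ _w : V, Fintype.card V ^ 2 :=
        -- `convert` reconciles the decidability instances of the two filters
        sum_congr rfl fun w _ => by convert two_mul_card_lt_add_card_eq (G.dist w)
    _ = Fintype.card V ^ 3 := by simp [pow_succ, mul_assoc]

end SumPeripherality

end SimpleGraph

namespace Fin

variable {n : ℕ}

/-- The distance from `0` to `a` around the cycle `ℤ/(n+1)`: the absolute value of the
representative of `a` in `(-(n+1)/2, (n+1)/2]`. -/
def cycleNorm (a : Fin (n + 1)) : ℕ := (ZMod.finEquiv (n + 1) a).valMinAbs.natAbs

@[simp] lemma cycleNorm_zero : cycleNorm (0 : Fin (n + 1)) = 0 := by simp [cycleNorm]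

@[simp] lemma cycleNorm_neg (a : Fin (n + 1)) : cycleNorm (-a) = cycleNorm a := by
  simp [cycleNorm]

lemma cycleNorm_add_le (a b : Fin (n + 1)) : cycleNorm (a + b) ≤ cycleNorm a + cycleNorm b := by
  rw [cycleNorm, map_add]
  exact (ZMod.natAbs_valMinAbs_add_le _ _).trans (Int.natAbs_add_le _ _)

lemma cycleNorm_le_val (a : Fin (n + 1)) : cycleNorm a ≤ a.val := by
  rw [cycleNorm, ZMod.valMinAbs_natAbs_eq_min]
  exact min_le_left _ _

lemma cycleNorm_eq_cycleNorm_iff {a b : Fin (n + 1)} :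
    cycleNorm a = cycleNorm b ↔ a = b ∨ a = -b := by
  rw [cycleNorm, cycleNorm, ZMod.natAbs_valMinAbs_eq_natAbs_valMinAbs, ← map_neg,
    (ZMod.finEquiv _).injective.eq_iff, (ZMod.finEquiv _).injective.eq_iff]

lemma exists_zsmul_one_eq_and_natAbs_eq_cycleNorm (a : Fin (n + 1)) :
    ∃ k : ℤ, k • (1 : Fin (n + 1)) = a ∧ k.natAbs = cycleNorm a :=
  ⟨_, (ZMod.finEquiv _).injective (by rw [map_zsmul, map_one, zsmul_one, ZMod.coe_valMinAbs]),
    rfl⟩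

lemma card_cycleNorm_eq_add_ite (a : Fin (n + 1)) :
    #{b : Fin (n + 1) | cycleNorm a = cycleNorm b} + (if -a = a then 1 else 0) = 2 := by
  have h : ({b | cycleNorm a = cycleNorm b} : Finset (Fin (n + 1))) = {a, -a} := by
    ext b
    simp [eq_comm (a := cycleNorm a), cycleNorm_eq_cycleNorm_iff]
  split_ifs with ha
  · simp [h, ha]
  · simp [h, card_pair (Ne.symm ha)]

lemma neg_eq_self_iff {a : Fin (n + 1)} : -a = a ↔ a.val = 0 ∨ 2 * a.val = n + 1 := by
  rw [← (ZMod.finEquiv _).injective.eq_iff, map_neg, ZMod.neg_eq_self_iff, ← ZMod.val_eq_zero]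
  rfl

lemma card_neg_eq_self : #{a : Fin (n + 1) | -a = a} = if Even (n + 1) then 2 else 1 := by
  split_ifs with hn
  · obtain ⟨k, hk⟩ := hn
    refine card_eq_two.2 ⟨0, ⟨k, by omega⟩, by simp [Fin.ext_iff]; omega, ?_⟩
    ext a
    simp only [mem_filter, mem_univ, true_and, neg_eq_self_iff]
    simp only [mem_insert, mem_singleton, Fin.ext_iff, Fin.val_zero]
    omega
  · rw [Nat.even_iff] at hn
    refine card_eq_one.2 ⟨0, ?_⟩
    ext a
    simp only [mem_filter, mem_univ, true_and, neg_eq_self_iff]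
    simp only [mem_singleton, Fin.ext_iff, Fin.val_zero]
    omega

end Fin

namespace SimpleGraph

open Fin

section CycleGraph

variable {n : ℕ}

lemma cycleGraph_dist_add_one_le (x : Fin (n + 1)) : (cycleGraph (n + 1)).dist x (x + 1) ≤ 1 := by
  rcases n with _ | n
  · simp
  · exact (dist_eq_one_iff_adj.2 (cycleGraph_adj.2 (Or.inr (add_sub_cancel_left x 1)))).le

lemma cycleGraph_dist_add_zsmul_one_le (u : Fin (n + 1)) (k : ℤ) :
    (cycleGraph (n + 1)).dist u (u + k • 1) ≤ k.natAbs := by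
  have step {x y : Fin (n + 1)} (hxy : (cycleGraph (n + 1)).dist x y ≤ 1) :
      (cycleGraph (n + 1)).dist u y ≤ (cycleGraph (n + 1)).dist u x + 1 :=
    cycleGraph_connected.dist_triangle.trans (Nat.add_le_add_left hxy _)
  induction k using Int.induction_on with
  | zero => simp
  | succ k ih =>
    rw [add_zsmul, one_zsmul, ← add_assoc]
    exact (step (cycleGraph_dist_add_one_le _)).trans (by omega)
  | pred k ih =>
    have h : u + (-k - 1 : ℤ) • 1 + 1 = u + (-k : ℤ) • 1 := by
      rw [sub_zsmul, one_zsmul]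
      abel
    refine (step (x := u + (-k : ℤ) • 1) ?_).trans (by omega)
    rw [dist_comm, ← h]
    exact cycleGraph_dist_add_one_le _

lemma cycleNorm_sub_le_one_of_cycleGraph_adj {x y : Fin (n + 1)}
    (h : (cycleGraph (n + 1)).Adj x y) : cycleNorm (y - x) ≤ 1 := by
  rcases cycleGraph_adj'.1 h with h | h
  · rw [← neg_sub, cycleNorm_neg]
    exact (cycleNorm_le_val _).trans_eq h
  · exact (cycleNorm_le_val _).trans_eq h

lemma cycleGraph_dist (u v : Fin (n + 1)) : (cycleGraph (n + 1)).dist u v = cycleNorm (v - u) := by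
  refine le_antisymm ?_ ?_
  · obtain ⟨k, hk, hnorm⟩ := exists_zsmul_one_eq_and_natAbs_eq_cycleNorm (v - u)
    simpa [hk, hnorm] using cycleGraph_dist_add_zsmul_one_le u k
  · have hf (x y : Fin (n + 1)) (h : (cycleGraph (n + 1)).Adj x y) :
        cycleNorm (y - u) ≤ cycleNorm (x - u) + 1 := by
      rw [← sub_add_sub_cancel y x u, add_comm]
      exact (cycleNorm_add_le _ _).trans
        (Nat.add_le_add_left (cycleNorm_sub_le_one_of_cycleGraph_adj h) _)
    simpa using (cycleGraph_connected u v).le_add_dist_of_forall_adj hf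

lemma cycleGraph_card_dist_eq_add_card_neg_eq_self (w : Fin (n + 1)) :
    #{p : Fin (n + 1) × Fin (n + 1) |
        (cycleGraph (n + 1)).dist w p.1 = (cycleGraph (n + 1)).dist w p.2} +
      #{a : Fin (n + 1) | -a = a} = 2 * (n + 1) := by
  have htranslate : #{p : Fin (n + 1) × Fin (n + 1) |
      (cycleGraph (n + 1)).dist w p.1 = (cycleGraph (n + 1)).dist w p.2} =
      #{p : Fin (n + 1) × Fin (n + 1) | cycleNorm p.1 = cycleNorm p.2} :=
    card_equiv ((Equiv.subRight w).prodCongr (Equiv.subRight w)) (by simp [cycleGraph_dist])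
  rw [htranslate, card_filter, card_filter, Fintype.sum_prod_type, ← sum_add_distrib]
  simp only [← card_filter, card_cycleNorm_eq_add_ite]
  simp [mul_comm]

end CycleGraph

lemma cycleGraph_two_mul_spr (n : ℕ) :
    2 * spr (cycleGraph n) + 2 * n ^ 2 = n ^ 3 + n * (if Even n then 2 else 1) := by
  rcases n with _ | n
  · simp [spr]
  have hspr := two_mul_spr_add_sum_card_dist_eq (cycleGraph (n + 1))
  have hsum := Fintype.sum_congr _ _ (cycleGraph_card_dist_eq_add_card_neg_eq_self (n := n))
  rw [sum_add_distrib] at hsum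
  simp only [Finset.sum_const, card_univ, Fintype.card_fin, smul_eq_mul, card_neg_eq_self]
    at hspr hsum
  linarith

end SimpleGraph

theorem spr_cycleGraph_general (n : ℕ) :
    (Even n → (spr (SimpleGraph.cycleGraph n) : ℚ) =
      (n : ℚ) ^ 2 * ((n : ℚ) - 1) / 2 - (n : ℚ) * ((n : ℚ) - 2) / 2) ∧
    (Odd n → (spr (SimpleGraph.cycleGraph n) : ℚ) =
      (n : ℚ) ^ 2 * ((n : ℚ) - 1) / 2 - (n : ℚ) * ((n : ℚ) - 1) / 2) := by
  have h := SimpleGraph.cycleGraph_two_mul_spr n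
  refine ⟨fun hn => ?_, fun hn => ?_⟩
  · rw [if_pos hn] at h
    have hq : 2 * (spr (SimpleGraph.cycleGraph n) : ℚ) + 2 * n ^ 2 = n ^ 3 + n * 2 := by
      exact_mod_cast h
    linear_combination hq / 2
  · rw [if_neg (Nat.not_even_iff_odd.2 hn)] at h
    have hq : 2 * (spr (SimpleGraph.cycleGraph n) : ℚ) + 2 * n ^ 2 = n ^ 3 + n * 1 := by
      exact_mod_cast h
    linear_combination hq / 2

theorem spr_cycleGraph (n : ℕ) (hn : 3 ≤ n) :
    (Even n → (spr (SimpleGraph.cycleGraph n) : ℚ) =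
      (n : ℚ) ^ 2 * ((n : ℚ) - 1) / 2 - (n : ℚ) * ((n : ℚ) - 2) / 2) ∧
    (Odd n → (spr (SimpleGraph.cycleGraph n) : ℚ) =
      (n : ℚ) ^ 2 * ((n : ℚ) - 1) / 2 - (n : ℚ) * ((n : ℚ) - 1) / 2) :=
  spr_cycleGraph_general n
end
end
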